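/- arXiv:2403.05719 — 14 statements merged into one kernel-verified Lean document; each statement's English description precedes it below -/
import Mathlib

section
/- For p prime and n ≥ 1, the dimension over ℤ/pℤ of the linear span of the functions x ↦ 1[⟨x,y⟩ = 0] (for y ranging over (ℤ/pℤ)^n, where 1[·] denotes the indicator, valued in ℤ/pℤ, of the condition ⟨x,y⟩ = 0 in ℤ/pℤ) inside the space of functions (ℤ/pℤ)^n → ℤ/pℤ equals C(p+n−2, n−1) + 1, where C denotes the binomial coefficient. Equivalently, the ℤ/pℤ-rank of the point-hyperplane incidence matrix W_{p,n}, whose rows and columns are indexed by x,y ∈ (ℤ/pℤ)^n and whose (x,y)-entry is 1 if ⟨x,y⟩ = 0 and 0 otherwise, equals C(p+n−2, n−1) + 1. -/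
/-!
Over `ℤ/pℤ` one has `1[z = 0] = 1 - z ^ (p - 1)`, and the multinomial theorem expands
`⟨x, y⟩ ^ (p - 1)` as `∑ multinomial(a) yᵃ xᵃ` over the exponents `a` with `|a| = p - 1`.
Hence `1[⟨x, y⟩ = 0] = ∑ₐ cₐ yᵃ xᵃ` with `a` ranging over `0` and the `a` with `|a| = p - 1`, and
every `cₐ` is nonzero because `multinomial(a)` divides `(p - 1)!`. All these exponents are `< p`, so
the monomials `xᵃ` are linearly independent functions on `(ℤ/pℤ)ⁿ`, in `x` as well as in `y`.
Row rank being column rank, the span of the functions `x ↦ 1[⟨x, y⟩ = 0]` then has one dimension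
per exponent: `1 + C(p + n - 2, n - 1)` by stars and bars.
-/

open Finset MvPolynomial Module Matrix

universe u

theorem linearIndependent_prod_pow_of_lt_card {K σ : Type u} [Field K] [Fintype K] [Fintype σ] :
    LinearIndependent K (fun a : {a : σ → ℕ // ∀ i, a i < Fintype.card K} =>
      fun x : σ → K => ∏ i, x i ^ a.1 i) := by
  set m : {a : σ → ℕ // ∀ i, a i < Fintype.card K} → MvPolynomial σ K :=
    fun a => monomial (Finsupp.equivFunOnFinite.symm a.1) 1
  have hm : LinearIndependent K m :=
    (basisMonomials σ K).linearIndependent.comp _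
      (Finsupp.equivFunOnFinite.symm.injective.comp Subtype.val_injective)
  have hdisj : Disjoint (Submodule.span K (Set.range m)) (LinearMap.ker (evalₗ K σ)) := by
    refine Submodule.disjoint_def.mpr fun P hP hker =>
      eq_zero_of_eval_eq_zero σ K P (congrFun hker) (Submodule.span_le.mpr ?_ hP)
    rintro _ ⟨a, rfl⟩
    rw [SetLike.mem_coe, mem_restrictDegree]
    intro s hs i
    rw [Finset.mem_singleton.mp (support_monomial_subset hs), Finsupp.coe_equivFunOnFinite_symm]
    exact Nat.le_sub_one_of_lt (a.2 i)
  have heval : evalₗ K σ ∘ m = fun a x => ∏ i, x i ^ a.1 i := by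
    funext a x
    simp [m, evalₗ, eval_monomial, Finsupp.prod_pow]
  rw [← heval]
  exact hm.map hdisj

theorem finrank_span_range_sum_smul {K M ι κ : Type*} [Field K] [AddCommGroup M] [Module K M]
    [Fintype ι] [Finite κ] {u : ι → M} (hu : LinearIndependent K u) {v : ι → κ → K}
    (hv : LinearIndependent K v) :
    finrank K (Submodule.span K (Set.range fun k => ∑ i, v i k • u i)) = Fintype.card ι := by
  cases nonempty_fintype κ
  set C : Matrix ι κ K := Matrix.of v
  have hrange : Set.range (fun k => ∑ i, v i k • u i) =
      Fintype.linearCombination K u '' Set.range Cᵀ.row := by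
    rw [← Set.range_comp]; rfl
  calc finrank K (Submodule.span K (Set.range fun k => ∑ i, v i k • u i))
      = finrank K (Submodule.span K (Set.range Cᵀ.row)) := by
        rw [hrange, Submodule.span_image]
        exact (Submodule.equivMapOfInjective _
          (linearIndependent_iff_injective_fintypeLinearCombination.mp hu) _).finrank_eq.symm
    _ = Cᵀ.rank := Cᵀ.rank_eq_finrank_span_row.symm
    _ = Fintype.card ι := by rw [Matrix.rank_transpose]; exact hv.rank_matrix

theorem finrank_span_range_sum_mul_prod_pow {K σ : Type u} [Field K] [Fintype K] [Fintype σ]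
    (s : Finset (σ → ℕ)) (hs : ∀ a ∈ s, ∀ i, a i < Fintype.card K)
    (c : (σ → ℕ) → K) (hc : ∀ a ∈ s, c a ≠ 0) :
    finrank K (Submodule.span K (Set.range fun (y x : σ → K) =>
      ∑ a ∈ s, c a * (∏ i, y i ^ a i) * ∏ i, x i ^ a i)) = #s := by
  let mono : s → (σ → K) → K := fun a x => ∏ i, x i ^ a.1 i
  have hmono : LinearIndependent K mono :=
    (linearIndependent_prod_pow_of_lt_card (K := K) (σ := σ)).comp
      (fun a : s => (⟨a.1, hs a.1 a.2⟩ : {a : σ → ℕ // ∀ i, a i < Fintype.card K}))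
      fun _ _ h => Subtype.ext (Subtype.mk.inj h)
  have hscaled : LinearIndependent K fun (a : s) (y : σ → K) => c a * mono a y :=
    hmono.units_smul fun a => Units.mk0 (c a) (hc a a.2)
  have hsum : (fun (y x : σ → K) => ∑ a ∈ s, c a * (∏ i, y i ^ a i) * ∏ i, x i ^ a i) =
      fun y => ∑ a : s, (c a * mono a y) • mono a := by
    funext y x
    rw [Finset.sum_apply, ← sum_coe_sort s]
    rfl
  rw [hsum, finrank_span_range_sum_smul hmono hscaled, Fintype.card_coe]

theorem zero_notMem_piAntidiag {ι : Type*} [DecidableEq ι] (s : Finset ι) {k : ℕ} (hk : k ≠ 0) :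
    (0 : ι → ℕ) ∉ piAntidiag s k := fun h =>
  hk (by simpa using (mem_piAntidiag.mp h).1.symm)

theorem card_piAntidiag_univ {ι : Type*} [Fintype ι] [DecidableEq ι] (k : ℕ) :
    #(piAntidiag (univ : Finset ι) k) = (Fintype.card ι + k - 1).choose k := by
  rw [← map_sym_eq_piAntidiag, card_map, sym_univ, card_univ, Sym.card_sym_eq_choose]

theorem ite_eq_zero_eq_one_sub_pow {K : Type*} [Field K] [Fintype K] [DecidableEq K] (z : K) :
    (if z = 0 then 1 else 0) = 1 - z ^ (Fintype.card K - 1) := by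
  split_ifs with hz
  · rw [hz, zero_pow (Nat.sub_ne_zero_of_lt Fintype.one_lt_card), sub_zero]
  · rw [FiniteField.pow_card_sub_one_eq_one z hz, sub_self]

theorem sum_mul_pow_eq_sum_piAntidiag {R σ : Type*} [CommSemiring R] [Fintype σ] [DecidableEq σ]
    (x y : σ → R) (k : ℕ) :
    (∑ i, x i * y i) ^ k =
      ∑ a ∈ piAntidiag univ k,
        (Nat.multinomial univ a : R) * (∏ i, y i ^ a i) * ∏ i, x i ^ a i := by
  rw [sum_pow_eq_sum_piAntidiag]
  refine sum_congr rfl fun a _ => ?_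
  rw [mul_assoc, ← prod_mul_distrib]
  simp_rw [mul_pow, mul_comm]

theorem ZMod.natCast_multinomial_ne_zero {p : ℕ} [Fact p.Prime] {ι : Type*} (s : Finset ι)
    (a : ι → ℕ) (ha : ∑ i ∈ s, a i < p) : (Nat.multinomial s a : ZMod p) ≠ 0 := by
  rw [Ne, ZMod.natCast_eq_zero_iff]
  intro hdvd
  have : p ∣ (∑ i ∈ s, a i).factorial := Nat.multinomial_spec s a ▸ dvd_mul_of_dvd_right hdvd _
  exact absurd ((Fact.out : p.Prime).dvd_factorial.mp this) (by omega)

theorem ite_sum_mul_eq_zero_eq_sum {p : ℕ} [Fact p.Prime] {σ : Type*} [Fintype σ] [DecidableEq σ]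
    (x y : σ → ZMod p) :
    (if ∑ i, x i * y i = 0 then 1 else 0) =
      ∑ a ∈ insert 0 (piAntidiag univ (p - 1)),
        (if a = 0 then 1 else -(Nat.multinomial univ a : ZMod p)) * (∏ i, y i ^ a i) *
          ∏ i, x i ^ a i := by
  have hp := (Fact.out : p.Prime).two_le
  have h0 : (0 : σ → ℕ) ∉ piAntidiag univ (p - 1) := zero_notMem_piAntidiag univ (by omega)
  rw [sum_insert h0, ite_eq_zero_eq_one_sub_pow, ZMod.card, sum_mul_pow_eq_sum_piAntidiag,
    sub_eq_add_neg, ← sum_neg_distrib]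
  simp only [if_true, Pi.zero_apply, pow_zero, prod_const_one, mul_one]
  refine congrArg _ (sum_congr rfl fun a ha => ?_)
  rw [if_neg (ne_of_mem_of_not_mem ha h0), neg_mul, neg_mul]

theorem finrank_span_range_ite_sum_mul_eq_zero (p : ℕ) [Fact p.Prime] (σ : Type) [Fintype σ]
    [DecidableEq σ] :
    finrank (ZMod p) (Submodule.span (ZMod p) (Set.range fun (y x : σ → ZMod p) =>
      if ∑ i, x i * y i = 0 then (1 : ZMod p) else 0)) =
      #(piAntidiag (univ : Finset σ) (p - 1)) + 1 := by
  have hp := (Fact.out : p.Prime).two_le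
  have h0 : (0 : σ → ℕ) ∉ piAntidiag univ (p - 1) := zero_notMem_piAntidiag univ (by omega)
  have hdeg : ∀ a ∈ insert 0 (piAntidiag (univ : Finset σ) (p - 1)), ∑ i, a i < p := by
    intro a ha
    rcases mem_insert.mp ha with rfl | ha
    · simp only [Pi.zero_apply, sum_const_zero]; omega
    · rw [(mem_piAntidiag.mp ha).1]; omega
  have hexp : ∀ a ∈ insert 0 (piAntidiag (univ : Finset σ) (p - 1)), ∀ i,
      a i < Fintype.card (ZMod p) := by
    intro a ha i
    rw [ZMod.card]
    exact (single_le_sum (fun j _ => Nat.zero_le (a j)) (mem_univ i)).trans_lt (hdeg a ha)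
  have hcoeff : ∀ a ∈ insert 0 (piAntidiag (univ : Finset σ) (p - 1)),
      (if a = 0 then 1 else -(Nat.multinomial univ a : ZMod p)) ≠ 0 := by
    intro a ha
    split_ifs
    · exact one_ne_zero
    · exact neg_ne_zero.mpr (ZMod.natCast_multinomial_ne_zero univ a (hdeg a ha))
  have hexpand : (fun (y x : σ → ZMod p) => if ∑ i, x i * y i = 0 then (1 : ZMod p) else 0) =
      fun y x => ∑ a ∈ insert 0 (piAntidiag univ (p - 1)),
        (if a = 0 then 1 else -(Nat.multinomial univ a : ZMod p)) * (∏ i, y i ^ a i) *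
          ∏ i, x i ^ a i :=
    funext₂ fun y x => ite_sum_mul_eq_zero_eq_sum x y
  rw [hexpand, finrank_span_range_sum_mul_prod_pow _ hexp _ hcoeff, card_insert_of_notMem h0]

/-- For `p` prime and `n ≥ 1`, the dimension over `ℤ/pℤ` of the span of the
indicator functions `x ↦ 1[⟨x,y⟩ = 0]` for `y ∈ (ℤ/pℤ)^n` equals `C(p+n−2, n−1) + 1`. -/
theorem stmt_0 (p n : ℕ) [Fact p.Prime] (hn : 1 ≤ n) :
    Module.finrank (ZMod p)
      (Submodule.span (ZMod p)
        {f : (Fin n → ZMod p) → ZMod p |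
          ∃ y : Fin n → ZMod p,
            f = fun x => if (∑ i, x i * y i) = 0 then 1 else 0}) =
    Nat.choose (p + n - 2) (n - 1) + 1 := by
  have hp := (Fact.out : p.Prime).two_le
  have hset : {f : (Fin n → ZMod p) → ZMod p | ∃ y : Fin n → ZMod p,
      f = fun x => if (∑ i, x i * y i) = 0 then 1 else 0} =
      Set.range fun (y x : Fin n → ZMod p) => if ∑ i, x i * y i = 0 then (1 : ZMod p) else 0 :=
    Set.ext fun _ => exists_congr fun _ => eq_comm
  rw [hset, finrank_span_range_ite_sum_mul_eq_zero, card_piAntidiag_univ, Fintype.card_fin,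
    show n + (p - 1) - 1 = p + n - 2 by omega,
    Nat.choose_symm_of_eq_add (show p + n - 2 = (p - 1) + (n - 1) by omega)]
end

section
/- The dimension of 𝓗^n over ℤ/pℤ is at most C(p^k−1+n, n), where C denotes the binomial coefficient. -/
/-!
Every function `ZMod (p ^ k) → ZMod p` is, by Newton interpolation, a combination of the
functions `u ↦ C(u, l) mod p` with `l < p ^ k`. For such `l` Vandermonde's identity
`C(u + v, l) = ∑ C(u, i) C(v, l - i)` holds on `ZMod (p ^ k)` modulo `p`, because
`C(w + p ^ k, l) ≡ C(w, l)`. Writing `⟨x - a, b⟩` as a sum of the coordinates `x i` repeated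
`(b i).val` times plus a constant, and using that a product `C(u, a) C(u, b)` is a combination of
`C(u, l)` with `l ≤ a + b`, the function `C(⟨x - a, b⟩, l)` is a combination of the products
`∏ i, C(x i, α i)` with `∑ i, α i ≤ l`. So every hyperplane indicator lies in the span of these
products for `∑ i, α i ≤ p ^ k - 1`, and there are `C(p ^ k - 1 + n, n)` such exponents `α`.
-/

open Finset Module

namespace BinomialFiltration

lemma choose_mul_choose_eq_sum (u a b : ℕ) :
    u.choose a * u.choose b =
      ∑ ij ∈ antidiagonal b, u.choose (a + ij.1) * (a + ij.1).choose a * a.choose ij.2 := by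
  rcases lt_or_ge u a with hua | hau
  · simp [Nat.choose_eq_zero_of_lt hua, Nat.choose_eq_zero_of_lt (hua.trans_le le_self_add)]
  · calc u.choose a * u.choose b = u.choose a * (u - a + a).choose b := by
          rw [Nat.sub_add_cancel hau]
      _ = ∑ ij ∈ antidiagonal b, u.choose a * ((u - a).choose ij.1 * a.choose ij.2) := by
          rw [Nat.add_choose_eq, mul_sum]
      _ = _ := sum_congr rfl fun ij _ => by
          rw [Nat.choose_mul le_self_add, Nat.add_sub_cancel_left]; ring

variable (p q : ℕ) (ι : Type*) [Fintype ι]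

def binomFn (l : ℕ) (u : ZMod q) : ZMod p := (u.val.choose l : ZMod p)

def binomMonomial (α : ι → ℕ) (x : ι → ZMod q) : ZMod p := ∏ i, binomFn p q (α i) (x i)

def binomDegreeLE (m : ℕ) : Submodule (ZMod p) ((ι → ZMod q) → ZMod p) :=
  Submodule.span (ZMod p) (binomMonomial p q ι '' {α | ∑ i, α i ≤ m})

variable {p q ι}

lemma binomFn_mul_binomFn (a b : ℕ) (u : ZMod q) :
    binomFn p q a u * binomFn p q b u =
      ∑ ij ∈ antidiagonal b,
        ((a + ij.1).choose a * a.choose ij.2 : ℕ) * binomFn p q (a + ij.1) u := by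
  simp only [binomFn]
  rw [← Nat.cast_mul, choose_mul_choose_eq_sum]
  push_cast
  exact sum_congr rfl fun _ _ => by ring

lemma sum_binomFn_mul_fwdDiff [NeZero q] (g : ZMod q → ZMod p) (u : ZMod q) :
    ∑ l ∈ range q, binomFn p q l u * (fwdDiff 1)^[l] g 0 = g u := by
  have newton := shift_eq_sum_fwdDiff_iter 1 g u.val 0
  rw [zero_add, nsmul_one, ZMod.natCast_zmod_val] at newton
  rw [newton, ← sum_subset (range_subset_range.2 (Nat.succ_le_of_lt u.val_lt))]
  · simp [binomFn, nsmul_eq_mul]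
  · intro l _ hl
    simp [binomFn, Nat.choose_eq_zero_of_lt (by simpa using hl : u.val < l)]

lemma binomMonomial_mem_binomDegreeLE {α : ι → ℕ} {m : ℕ} (h : ∑ i, α i ≤ m) :
    binomMonomial p q ι α ∈ binomDegreeLE p q ι m :=
  Submodule.subset_span ⟨α, h, rfl⟩

lemma binomDegreeLE_mono : Monotone (binomDegreeLE p q ι) :=
  fun _ _ h => Submodule.span_mono (Set.image_mono fun _ hα => le_trans hα h)

lemma const_mem_binomDegreeLE (c : ZMod p) (m : ℕ) : (fun _ => c) ∈ binomDegreeLE p q ι m := by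
  have : (fun _ => c) = c • binomMonomial p q ι 0 := funext fun x => by
    simp [binomMonomial, binomFn]
  rw [this]
  exact Submodule.smul_mem _ _ (binomMonomial_mem_binomDegreeLE (by simp))

lemma binomFn_comp_eval_mem [DecidableEq ι] (i : ι) (l : ℕ) :
    (fun x => binomFn p q l (x i)) ∈ binomDegreeLE p q ι l := by
  have : (fun x : ι → ZMod q => binomFn p q l (x i)) = binomMonomial p q ι (Pi.single i l) :=
    funext fun x => by
      rw [binomMonomial, prod_eq_single i (fun j _ hj => by simp [hj, binomFn]) (by simp)]
      simp
  rw [this]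
  exact binomMonomial_mem_binomDegreeLE (by simp)

lemma binomMonomial_mul_binomMonomial [DecidableEq ι] (α β : ι → ℕ) :
    binomMonomial p q ι α * binomMonomial p q ι β =
      ∑ J ∈ Fintype.piFinset fun i => antidiagonal (β i),
        (∏ i, (((α i + (J i).1).choose (α i) * (α i).choose (J i).2 : ℕ) : ZMod p)) •
          binomMonomial p q ι fun i => α i + (J i).1 := by
  funext x
  simp only [Pi.mul_apply, Finset.sum_apply, Pi.smul_apply, smul_eq_mul, binomMonomial]
  rw [← prod_mul_distrib, prod_congr rfl fun i _ => binomFn_mul_binomFn _ _ (x i), prod_univ_sum]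
  simp only [prod_mul_distrib]

lemma binomMonomial_mul_mem {α β : ι → ℕ} {a b : ℕ} (hα : ∑ i, α i ≤ a) (hβ : ∑ i, β i ≤ b) :
    binomMonomial p q ι α * binomMonomial p q ι β ∈ binomDegreeLE p q ι (a + b) := by
  classical
  rw [binomMonomial_mul_binomMonomial]
  refine sum_mem fun J hJ => Submodule.smul_mem _ _ (binomMonomial_mem_binomDegreeLE ?_)
  have hJβ : ∀ i, (J i).1 ≤ β i := fun i => by
    have := Finset.HasAntidiagonal.mem_antidiagonal.1 (Fintype.mem_piFinset.1 hJ i)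
    omega
  calc ∑ i, (α i + (J i).1) = ∑ i, α i + ∑ i, (J i).1 := sum_add_distrib
    _ ≤ a + b := add_le_add hα ((sum_le_sum fun i _ => hJβ i).trans hβ)

lemma mul_mem_binomDegreeLE {f g : (ι → ZMod q) → ZMod p} {a b : ℕ}
    (hf : f ∈ binomDegreeLE p q ι a) (hg : g ∈ binomDegreeLE p q ι b) :
    f * g ∈ binomDegreeLE p q ι (a + b) := by
  have : binomDegreeLE p q ι a * binomDegreeLE p q ι b ≤ binomDegreeLE p q ι (a + b) := by
    rw [binomDegreeLE, binomDegreeLE, Submodule.span_mul_span, Submodule.span_le]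
    rintro _ ⟨_, ⟨α, hα, rfl⟩, _, ⟨β, hβ, rfl⟩, rfl⟩
    exact binomMonomial_mul_mem hα hβ
  exact this (Submodule.mul_mem_mul hf hg)

variable [Fact p.Prime]

lemma natCast_choose_add_prime_pow (k w : ℕ) {m : ℕ} (hm : m < p ^ k) :
    ((w + p ^ k).choose m : ZMod p) = w.choose m := by
  rw [Nat.add_choose_eq, Nat.cast_sum,
    sum_eq_single_of_mem (m, 0) (Finset.HasAntidiagonal.mem_antidiagonal.2 (add_zero m))]
  · simp
  · rintro ⟨i, j⟩ hij hne
    have hj : j ≠ 0 := by rintro rfl; simp_all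
    have hjm : j ≤ m := by rw [Finset.HasAntidiagonal.mem_antidiagonal] at hij; omega
    rw [Nat.cast_mul, (ZMod.natCast_eq_zero_iff _ _).2
      ((Fact.out : p.Prime).dvd_choose_pow hj (by omega)), mul_zero]

lemma natCast_choose_add_mul_prime_pow (k w t : ℕ) {m : ℕ} (hm : m < p ^ k) :
    ((w + t * p ^ k).choose m : ZMod p) = w.choose m := by
  induction t with
  | zero => simp
  | succ t ih => rw [add_one_mul, ← add_assoc, natCast_choose_add_prime_pow k _ hm, ih]

lemma binomFn_add {k m : ℕ} (hm : m < p ^ k) (u v : ZMod (p ^ k)) :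
    binomFn p (p ^ k) m (u + v) =
      ∑ ij ∈ antidiagonal m, binomFn p (p ^ k) ij.1 u * binomFn p (p ^ k) ij.2 v := by
  have hval : u.val + v.val = (u + v).val + (u.val + v.val) / p ^ k * p ^ k := by
    rw [ZMod.val_add, Nat.mod_add_div']
  simp only [binomFn]
  rw [← natCast_choose_add_mul_prime_pow k _ _ hm, ← hval, Nat.add_choose_eq]
  push_cast
  rfl

variable (p ι) (k : ℕ)

/-- The maps `φ` along which pulling back `u ↦ C(u, l)` does not raise the degree `l`. -/
def filtrationPreserving : AddSubmonoid ((ι → ZMod (p ^ k)) → ZMod (p ^ k)) where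
  carrier := {φ | ∀ l < p ^ k, (fun x => binomFn p (p ^ k) l (φ x)) ∈ binomDegreeLE p (p ^ k) ι l}
  zero_mem' _ _ := const_mem_binomDegreeLE (binomFn p (p ^ k) _ 0) _
  add_mem' {φ ψ} hφ hψ l hl := by
    have hsplit : (fun x => binomFn p (p ^ k) l ((φ + ψ) x)) = ∑ ij ∈ antidiagonal l,
        (fun x => binomFn p (p ^ k) ij.1 (φ x)) * fun x => binomFn p (p ^ k) ij.2 (ψ x) :=
      funext fun x => by simp [binomFn_add hl, Finset.sum_apply]
    rw [hsplit]
    refine sum_mem fun ij hij => ?_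
    rw [Finset.HasAntidiagonal.mem_antidiagonal] at hij
    exact hij ▸ mul_mem_binomDegreeLE (hφ _ (by omega)) (hψ _ (by omega))

variable {p ι k}

lemma mem_filtrationPreserving {φ : (ι → ZMod (p ^ k)) → ZMod (p ^ k)} :
    φ ∈ filtrationPreserving p ι k ↔
      ∀ l < p ^ k, (fun x => binomFn p (p ^ k) l (φ x)) ∈ binomDegreeLE p (p ^ k) ι l :=
  Iff.rfl

lemma eval_mem_filtrationPreserving [DecidableEq ι] (i : ι) :
    (fun x => x i) ∈ filtrationPreserving p ι k :=
  mem_filtrationPreserving.2 fun l _ => binomFn_comp_eval_mem i l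

lemma const_mem_filtrationPreserving (c : ZMod (p ^ k)) :
    (fun _ => c) ∈ filtrationPreserving p ι k :=
  mem_filtrationPreserving.2 fun l _ => const_mem_binomDegreeLE _ l

lemma affine_mem_filtrationPreserving (a b : ι → ZMod (p ^ k)) :
    (fun x => ∑ i, (x i - a i) * b i) ∈ filtrationPreserving p ι k := by
  classical
  have : (fun x : ι → ZMod (p ^ k) => ∑ i, (x i - a i) * b i) =
      ∑ i, (b i).val • ((fun x => x i) + fun _ => -a i) :=
    funext fun x => by
      rw [Finset.sum_apply]
      refine sum_congr rfl fun i _ => ?_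
      rw [Pi.smul_apply, Pi.add_apply, nsmul_eq_mul, ZMod.natCast_zmod_val]
      ring
  rw [this]
  exact sum_mem fun i _ => nsmul_mem
    (add_mem (eval_mem_filtrationPreserving i) (const_mem_filtrationPreserving _)) _

lemma comp_mem_binomDegreeLE {φ : (ι → ZMod (p ^ k)) → ZMod (p ^ k)}
    (hφ : φ ∈ filtrationPreserving p ι k) (g : ZMod (p ^ k) → ZMod p) :
    (fun x => g (φ x)) ∈ binomDegreeLE p (p ^ k) ι (p ^ k - 1) := by
  have : (fun x => g (φ x)) =
      ∑ l ∈ range (p ^ k), (fwdDiff 1)^[l] g 0 • fun x => binomFn p (p ^ k) l (φ x) :=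
    funext fun x => by simp [Finset.sum_apply, ← sum_binomFn_mul_fwdDiff g (φ x), mul_comm]
  rw [this]
  refine sum_mem fun l hl => Submodule.smul_mem _ _ ?_
  have hl := mem_range.1 hl
  exact binomDegreeLE_mono (by omega) (mem_filtrationPreserving.1 hφ l hl)

lemma card_exponents_le (m : ℕ) :
    Nat.card {α : ι → ℕ // ∑ i, α i ≤ m} ≤ (m + Fintype.card ι).choose (Fintype.card ι) := by
  classical
  let toSym : {α : ι → ℕ // ∑ i, α i ≤ m} → Sym (Option ι) m := fun α =>
    (Sym.equivNatSumOfFintype (Option ι) m).symm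
      ⟨fun o => o.elim (m - ∑ i, α.1 i) α.1, by simp [Fintype.sum_option, α.2]⟩
  have hinj : Function.Injective toSym := fun α β h => Subtype.ext <| funext fun i => by
    simpa [toSym] using congr_arg (fun s => (Sym.equivNatSumOfFintype (Option ι) m s).1 (some i)) h
  calc _ ≤ Nat.card (Sym (Option ι) m) := Nat.card_le_card_of_injective toSym hinj
    _ = _ := by
      rw [Nat.card_eq_fintype_card, Sym.card_sym_eq_choose, Fintype.card_option, add_comm m]
      simp [Nat.choose_symm_add]

lemma finrank_binomDegreeLE_le (m : ℕ) :
    finrank (ZMod p) (binomDegreeLE p q ι m) ≤ (m + Fintype.card ι).choose (Fintype.card ι) := by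
  have hfin : {α : ι → ℕ | ∑ i, α i ≤ m}.Finite :=
    (Set.Finite.pi fun _ => Set.finite_Iic m).subset fun α hα i _ =>
      (single_le_sum (fun _ _ => Nat.zero_le _) (mem_univ i)).trans hα
  have := hfin.fintype
  rw [binomDegreeLE, Set.image_eq_range]
  refine (finrank_range_le_card _).trans ?_
  rw [← Nat.card_eq_fintype_card]
  exact card_exponents_le m

end BinomialFiltration

open BinomialFiltration

theorem stmt_1_general (p k n : ℕ) [Fact p.Prime] :
    Module.finrank (ZMod p)
      (Submodule.span (ZMod p)
        {f : (Fin n → ZMod (p ^ k)) → ZMod p |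
          ∃ (a b : Fin n → ZMod (p ^ k)), (∃ i, IsUnit (b i)) ∧
            f = fun x => if (∑ i, (x i - a i) * b i) = 0 then 1 else 0}) ≤
    Nat.choose (p ^ k - 1 + n) n := by
  calc _ ≤ finrank (ZMod p) (binomDegreeLE p (p ^ k) (Fin n) (p ^ k - 1)) := by
        refine Submodule.finrank_mono (Submodule.span_le.2 ?_)
        rintro _ ⟨a, b, -, rfl⟩
        exact comp_mem_binomDegreeLE (affine_mem_filtrationPreserving a b)
          fun u => if u = 0 then 1 else 0
    _ ≤ _ := by
        simpa using finrank_binomDegreeLE_le (p := p) (q := p ^ k) (ι := Fin n) (p ^ k - 1)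

/-- The dimension of `𝓗^n` (the span over `ℤ/pℤ` of indicator functions of
affine hyperplanes `H_b(a)` in `R^n`, `R = ℤ/p^kℤ`, `b` a direction) is at most
`C(p^k−1+n, n)`. -/
theorem stmt_1 (p k n : ℕ) [Fact p.Prime] (hk : 1 ≤ k) :
    Module.finrank (ZMod p)
      (Submodule.span (ZMod p)
        {f : (Fin n → ZMod (p ^ k)) → ZMod p |
          ∃ (a b : Fin n → ZMod (p ^ k)), (∃ i, IsUnit (b i)) ∧
            f = fun x => if (∑ i, (x i - a i) * b i) = 0 then 1 else 0}) ≤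
    Nat.choose (p ^ k - 1 + n) n :=
  stmt_1_general p k n
end

section
/- Let n ≥ 2 and k ≥ 1. Then the dimension over ℤ/pℤ of the span of the functions x ↦ 1[⟨x,y⟩ = 0 in ℤ/p^kℤ] (for y ranging over all of (ℤ/p^kℤ)^n) inside functions (ℤ/p^kℤ)^n → ℤ/pℤ is at most 1 + Σ_{j=1}^{k} d_j, where d_j is the dimension over ℤ/pℤ of the span of the functions x ↦ 1[⟨x,b⟩ = 0 in ℤ/p^jℤ] inside functions (ℤ/p^jℤ)^n → ℤ/pℤ, with b ranging over all directions of (ℤ/p^jℤ)^n. -/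
/-!
A nonzero `y ∈ (ℤ/p^k)^n` factors as `y = p^m • c` with `m < k` and `c` having a unit
coordinate, and then `⟨x, y⟩ = 0` in `ℤ/p^k` exactly when `⟨x, c⟩ = 0` in `ℤ/p^(k-m)`. Hence each
indicator `1[⟨·, y⟩ = 0]` is either constant (`y = 0`) or the pullback, along reduction modulo
`p^j` with `j = k - m`, of a direction indicator at level `j`; pulling back does not raise
dimension.
-/

open Module Submodule

theorem Submodule.finrank_finset_sup_le {K V ι : Type*} [DivisionRing K] [AddCommGroup V]
    [Module K V] [FiniteDimensional K V] (s : Finset ι) (W : ι → Submodule K V) :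
    finrank K ↥(s.sup W) ≤ ∑ j ∈ s, finrank K (W j) := by
  classical
  induction s using Finset.cons_induction with
  | empty => simp
  | cons a s ha ih =>
    rw [Finset.sup_cons, Finset.sum_cons]
    exact (finrank_add_le_finrank_add_finrank _ _).trans (Nat.add_le_add_left ih _)

theorem ZMod.natCast_mul_eq_zero_iff_cast_eq_zero {a b N : ℕ} [NeZero b] (ha : a ≠ 0)
    (hN : a * b = N) (z : ZMod N) : (a : ZMod N) * z = 0 ↔ (ZMod.cast z : ZMod b) = 0 := by
  subst hN
  have : NeZero (a * b) := ⟨mul_ne_zero ha (NeZero.ne b)⟩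
  rw [← ZMod.natCast_zmod_val z, ← Nat.cast_mul, ZMod.cast_natCast (dvd_mul_left b a),
    ZMod.natCast_eq_zero_iff, ZMod.natCast_eq_zero_iff, Nat.mul_dvd_mul_iff_left (by omega)]

theorem ZMod.exists_eq_prime_pow_smul_of_ne_zero {ι : Type*} [Fintype ι] {p k : ℕ}
    [hp : Fact p.Prime] {y : ι → ZMod (p ^ k)} (hy : y ≠ 0) :
    ∃ m < k, ∃ c : ι → ZMod (p ^ k), (∃ i, IsUnit (c i)) ∧ y = (p : ZMod (p ^ k)) ^ m • c := by
  have hv : ∀ i, (((y i).val : ℕ) : ZMod (p ^ k)) = y i := fun i => ZMod.natCast_zmod_val _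
  obtain ⟨i₁, hi₁⟩ := Function.ne_iff.mp hy
  obtain ⟨g, hvg, hg⟩ := Finset.extract_gcd (fun i => (y i).val) ⟨i₁, Finset.mem_univ _⟩
  have hd : Finset.univ.gcd (fun i => (y i).val) ≠ 0 := fun h =>
    hi₁ (by rw [← hv, hvg i₁ (Finset.mem_univ _), h, zero_mul, Nat.cast_zero]; rfl)
  obtain ⟨m, d, hpd, hdm⟩ := Nat.exists_eq_pow_mul_and_not_dvd hd p hp.out.ne_one
  obtain ⟨i₀, hi₀⟩ : ∃ i, ¬ p ∣ g i := by
    by_contra! h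
    exact hp.out.not_dvd_one (hg ▸ Finset.dvd_gcd fun i _ => h i)
  have hy_eq : y = (p : ZMod (p ^ k)) ^ m • fun i => ((d * g i : ℕ) : ZMod (p ^ k)) := by
    funext i
    rw [← hv, hvg i (Finset.mem_univ _), hdm]
    simp [mul_assoc]
  refine ⟨m, ?_, _, ⟨i₀, ?_⟩, hy_eq⟩
  · by_contra! hkm
    have hpm : (p : ZMod (p ^ k)) ^ m = 0 := by
      rw [← Nat.cast_pow, ZMod.natCast_eq_zero_iff]
      exact pow_dvd_pow p hkm
    exact hy (by rw [hy_eq, hpm, zero_smul])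
  · rw [ZMod.isUnit_iff_coprime]
    exact Nat.Coprime.pow_right k
      ((hp.out.coprime_iff_not_dvd.mpr fun h => (hp.out.dvd_mul.mp h).elim hpd hi₀).symm)

theorem exists_direction_dotProduct_eq_zero_iff {ι : Type*} [Fintype ι] {p k : ℕ}
    [Fact p.Prime] {y : ι → ZMod (p ^ k)} (hy : y ≠ 0) :
    ∃ j ∈ Finset.Icc 1 k, ∃ b : ι → ZMod (p ^ j), (∃ i, IsUnit (b i)) ∧
      ∀ x : ι → ZMod (p ^ k),
        x ⬝ᵥ y = 0 ↔ (fun i => (ZMod.cast (x i) : ZMod (p ^ j))) ⬝ᵥ b = 0 := by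
  obtain ⟨m, hmk, c, ⟨i, hci⟩, rfl⟩ := ZMod.exists_eq_prime_pow_smul_of_ne_zero hy
  have hdvd : p ^ (k - m) ∣ p ^ k := pow_dvd_pow p (Nat.sub_le k m)
  let φ := ZMod.castHom hdvd (ZMod (p ^ (k - m)))
  refine ⟨k - m, Finset.mem_Icc.mpr ⟨by omega, Nat.sub_le k m⟩, φ ∘ c, ⟨i, hci.map φ⟩, fun x => ?_⟩
  have hφ : (fun i => (ZMod.cast (x i) : ZMod (p ^ (k - m)))) ⬝ᵥ (φ ∘ c) = φ (x ⬝ᵥ c) := by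
    simp only [dotProduct, Function.comp_apply, map_sum, map_mul, φ, ZMod.castHom_apply]
  rw [dotProduct_smul, smul_eq_mul, hφ, ← Nat.cast_pow, ZMod.castHom_apply,
    ZMod.natCast_mul_eq_zero_iff_cast_eq_zero (pow_ne_zero m (Fact.out : p.Prime).ne_zero)
      (by rw [← pow_add, Nat.add_sub_cancel' hmk.le])]

theorem span_dotProduct_indicators_le {ι K : Type*} [Fintype ι] [Semiring K] (p k : ℕ) [Fact p.Prime] :
    span K {f : (ι → ZMod (p ^ k)) → K | ∃ y, f = fun x => if x ⬝ᵥ y = 0 then 1 else 0} ≤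
      span K {fun _ => 1} ⊔ (Finset.Icc 1 k).sup fun j =>
        (span K {f : (ι → ZMod (p ^ j)) → K | ∃ b, (∃ i, IsUnit (b i)) ∧
          f = fun x => if x ⬝ᵥ b = 0 then 1 else 0}).map
        (LinearMap.funLeft K K fun x i => ZMod.cast (x i)) := by
  rw [span_le]
  rintro _ ⟨y, rfl⟩
  rcases eq_or_ne y 0 with rfl | hy
  · exact mem_sup_left (subset_span (by simp))
  · obtain ⟨j, hj, b, hb, hiff⟩ := exists_direction_dotProduct_eq_zero_iff hy
    refine mem_sup_right <|
      SetLike.le_def.mp (Finset.le_sup hj) ⟨_, subset_span ⟨b, hb, rfl⟩, ?_⟩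
    funext x
    simp only [LinearMap.funLeft_apply, hiff x]

theorem stmt_3_general (p k n : ℕ) [Fact p.Prime] :
    Module.finrank (ZMod p)
      (Submodule.span (ZMod p)
        {f : (Fin n → ZMod (p ^ k)) → ZMod p |
          ∃ y : Fin n → ZMod (p ^ k),
            f = fun x => if (∑ i, x i * y i) = 0 then 1 else 0}) ≤
    1 + ∑ j ∈ Finset.Icc 1 k,
      Module.finrank (ZMod p)
        (Submodule.span (ZMod p)
          {f : (Fin n → ZMod (p ^ j)) → ZMod p |
            ∃ b : Fin n → ZMod (p ^ j), (∃ i, IsUnit (b i)) ∧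
              f = fun x => if (∑ i, x i * b i) = 0 then 1 else 0}) := by
  refine (finrank_mono (span_dotProduct_indicators_le p k)).trans <|
    (finrank_add_le_finrank_add_finrank _ _).trans (add_le_add ?_ ?_)
  · exact (finrank_span_le_card _).trans (by simp)
  · exact (finrank_finset_sup_le _ _).trans (Finset.sum_le_sum fun j _ => finrank_map_le _ _)

/-- For `n ≥ 2`, `k ≥ 1`, the `ℤ/pℤ`-dimension of the span of the functions
`x ↦ 1[⟨x,y⟩ = 0]` on `(ℤ/p^kℤ)^n` (over all `y`) is at most `1 + Σ_{j=1}^{k} d_j`, where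
`d_j` is the dimension of the span of `x ↦ 1[⟨x,b⟩ = 0]` on `(ℤ/p^jℤ)^n` over directions `b`. -/
theorem stmt_3 (p k n : ℕ) [Fact p.Prime] (hn : 2 ≤ n) (hk : 1 ≤ k) :
    Module.finrank (ZMod p)
      (Submodule.span (ZMod p)
        {f : (Fin n → ZMod (p ^ k)) → ZMod p |
          ∃ y : Fin n → ZMod (p ^ k),
            f = fun x => if (∑ i, x i * y i) = 0 then 1 else 0}) ≤
    1 + ∑ j ∈ Finset.Icc 1 k,
      Module.finrank (ZMod p)
        (Submodule.span (ZMod p)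
          {f : (Fin n → ZMod (p ^ j)) → ZMod p |
            ∃ b : Fin n → ZMod (p ^ j), (∃ i, IsUnit (b i)) ∧
              f = fun x => if (∑ i, x i * b i) = 0 then 1 else 0}) :=
  stmt_3_general p k n
end

section
/- Let n ≥ 2 and k ≥ 1, and set R = ℤ/p^kℤ. Let A = dim_{ℤ/pℤ} span{1_{H_b(a)} : a ∈ R^n, b a direction in R^n} (span inside functions R^n → ℤ/pℤ), and let W = dim_{ℤ/pℤ} span{1_{H_b} : b a direction in R^{n+1}} (span inside functions R^{n+1} → ℤ/pℤ, where H_b = H_b(0) is the hyperplane through the origin with normal b). Then A ≤ W ≤ 2(k+1)·A. -/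
/-!
Restricting the homogeneous hyperplane of `R^{n+1}` with normal `(b, -⟨a, b⟩)` to the slice
`x_{n+1} = 1` gives the affine hyperplane `H_b(a)` of `R^n`, so restriction maps the span `W` onto
a space containing the span `A`, and `A ≤ W`.

Conversely, every function in `W` is invariant under scaling by units, and every element of
`ℤ/p^kℤ` is a unit times `p^j` with `j ≤ k`; so a function in `W` is determined by its restrictions
to the `k + 1` slices `x_{n+1} = p^j`. Each such restriction is a combination of indicators of
level sets `{x : ⟨x, b'⟩ = e}` with `b'` arbitrary. Writing `b' = c • d` with `d` a direction
(take `c` of minimal `p`-adic valuation among the coordinates), such a level set is the disjoint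
union of the affine hyperplanes `{⟨x, d⟩ = t}` over `c t = e`, hence lies in `A`. This gives
`W ≤ (k + 1) A`.
-/

open Matrix Module

namespace HyperplaneIndicators

section Linear

variable {K M N ι : Type*} [DivisionRing K] [AddCommGroup M] [Module K M] [AddCommGroup N]
  [Module K N] [Fintype ι]

theorem finrank_le_card_mul_finrank_of_forall_eq_zero {V : Submodule K M} {U : Submodule K N}
    [FiniteDimensional K U] (φ : ι → M →ₗ[K] N) (hmaps : ∀ i, ∀ f ∈ V, φ i f ∈ U)
    (hjoint : ∀ f ∈ V, (∀ i, φ i f = 0) → f = 0) :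
    finrank K V ≤ Fintype.card ι * finrank K U := by
  let L : V →ₗ[K] ι → U :=
    LinearMap.pi fun i => ((φ i).domRestrict V).codRestrict U fun f => hmaps i f f.2
  have hL : Function.Injective L := by
    refine (injective_iff_map_eq_zero L).mpr fun f hf => Subtype.ext (hjoint f f.2 fun i => ?_)
    exact congrArg Subtype.val (congrFun hf i)
  calc finrank K V ≤ finrank K (ι → U) := LinearMap.finrank_le_finrank_of_injective hL
    _ = Fintype.card ι * finrank K U := by
      rw [finrank_pi_fintype, Finset.sum_const, Finset.card_univ, smul_eq_mul]

end Linear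

variable (K : Type*) {R ι : Type*} [Semiring K] [CommRing R]

def IsDirection (b : ι → R) : Prop := ∃ i, IsUnit (b i)

variable [Fintype ι] [DecidableEq R]

def dotIndicator (b : ι → R) (e : R) : (ι → R) → K := fun x => if x ⬝ᵥ b = e then 1 else 0

variable (R ι)

def affineHyperplaneSpan : Submodule K ((ι → R) → K) :=
  Submodule.span K
    {f | ∃ a b : ι → R, IsDirection b ∧ f = fun x => if (x - a) ⬝ᵥ b = 0 then 1 else 0}

def linearHyperplaneSpan : Submodule K ((ι → R) → K) :=
  Submodule.span K {f | ∃ b : ι → R, IsDirection b ∧ f = dotIndicator K b 0}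

variable {K R ι}

theorem dotIndicator_mem_affineHyperplaneSpan {b : ι → R} (hb : IsDirection b) (e : R) :
    dotIndicator K b e ∈ affineHyperplaneSpan K R ι := by
  classical
  obtain ⟨i, u, hu⟩ := hb
  refine Submodule.subset_span ⟨Pi.single i (e * ↑u⁻¹), b, ⟨i, u, hu⟩, funext fun x => ?_⟩
  simp only [dotIndicator, sub_dotProduct, single_dotProduct, ← hu, Units.inv_mul_cancel_right,
    sub_eq_zero]

theorem dotIndicator_smul_eq_sum [Fintype R] (c e : R) (d : ι → R) :
    dotIndicator K (c • d) e = ∑ t ∈ Finset.univ.filter (c * · = e), dotIndicator K d t := by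
  funext x
  simp [dotIndicator, dotProduct_smul, Finset.sum_ite_eq]

theorem dotIndicator_smul_mem_affineHyperplaneSpan [Fintype R] {d : ι → R} (hd : IsDirection d)
    (c e : R) : dotIndicator K (c • d) e ∈ affineHyperplaneSpan K R ι := by
  rw [dotIndicator_smul_eq_sum]
  exact Submodule.sum_mem _ fun t _ => dotIndicator_mem_affineHyperplaneSpan hd t

theorem apply_unit_smul_of_mem_linearHyperplaneSpan {f : (ι → R) → K}
    (hf : f ∈ linearHyperplaneSpan K R ι) (u : Rˣ) (y : ι → R) : f (u • y) = f y := by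
  induction hf using Submodule.span_induction with
  | mem g hg =>
    obtain ⟨b, -, rfl⟩ := hg
    simp only [dotIndicator, smul_dotProduct, smul_eq_zero_iff_eq]
  | zero => rfl
  | add g h _ _ ihg ihh => simp only [Pi.add_apply, ihg, ihh]
  | smul a g _ ih => simp only [Pi.smul_apply, ih]

variable (K R) in
def sliceRestrict (n : ℕ) (c : R) : ((Fin (n + 1) → R) → K) →ₗ[K] (Fin n → R) → K :=
  LinearMap.funLeft K K fun x => Fin.snoc x c

theorem sliceRestrict_dotIndicator {n : ℕ} (c : R) (b : Fin (n + 1) → R) :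
    sliceRestrict K R n c (dotIndicator K b 0) =
      dotIndicator K (Fin.init b) (-(c * b (Fin.last n))) := by
  funext x
  have hdot : Fin.snoc x c ⬝ᵥ b = x ⬝ᵥ Fin.init b + c * b (Fin.last n) := by
    simp [dotProduct, Fin.sum_univ_castSucc, Fin.init]
  simp only [sliceRestrict, LinearMap.funLeft_apply, dotIndicator, hdot, add_eq_zero_iff_eq_neg]

theorem affineHyperplaneSpan_le_map_sliceRestrict_one (n : ℕ) :
    affineHyperplaneSpan K R (Fin n) ≤
      (linearHyperplaneSpan K R (Fin (n + 1))).map (sliceRestrict K R n 1) := by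
  rw [affineHyperplaneSpan, Submodule.span_le]
  rintro - ⟨a, b, ⟨i, hi⟩, rfl⟩
  refine ⟨dotIndicator K (Fin.snoc b (-(a ⬝ᵥ b))) 0,
    Submodule.subset_span ⟨_, ⟨i.castSucc, by rwa [Fin.snoc_castSucc]⟩, rfl⟩, ?_⟩
  rw [sliceRestrict_dotIndicator]
  funext x
  simp only [dotIndicator, Fin.init_snoc, Fin.snoc_last, one_mul, neg_neg, sub_dotProduct,
    sub_eq_zero]

theorem finrank_affineHyperplaneSpan_le {K : Type*} [DivisionRing K] [Fintype R] (n : ℕ) :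
    finrank K (affineHyperplaneSpan K R (Fin n)) ≤
      finrank K (linearHyperplaneSpan K R (Fin (n + 1))) :=
  (Submodule.finrank_mono (affineHyperplaneSpan_le_map_sliceRestrict_one n)).trans
    (Submodule.finrank_map_le _ _)

section PrimePow

variable {p k : ℕ} [Fact p.Prime]

theorem exists_eq_unit_mul_prime_pow (t : ZMod (p ^ k)) :
    ∃ j ≤ k, ∃ u : (ZMod (p ^ k))ˣ, t = u * (p : ZMod (p ^ k)) ^ j := by
  have hp : p.Prime := Fact.out
  by_cases ht : t = 0
  · exact ⟨k, le_rfl, 1, by rw [ht, ← Nat.cast_pow, ZMod.natCast_self, mul_zero]⟩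
  have hval0 : t.val ≠ 0 := (ZMod.val_ne_zero t).mpr ht
  obtain ⟨j, m, hpm, hval⟩ := Nat.exists_eq_pow_mul_and_not_dvd hval0 p hp.ne_one
  have hjk : j < k := (Nat.pow_lt_pow_iff_right hp.one_lt).mp <|
    (Nat.le_of_dvd (Nat.pos_of_ne_zero hval0) ⟨m, hval⟩).trans_lt (ZMod.val_lt t)
  refine ⟨j, hjk.le, ZMod.unitOfCoprime m ((hp.coprime_iff_not_dvd.mpr hpm).symm.pow_right k), ?_⟩
  rw [ZMod.coe_unitOfCoprime, ← ZMod.natCast_zmod_val t, hval]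
  push_cast
  ring

theorem exists_eq_smul_isDirection [Nonempty ι] (b : ι → ZMod (p ^ k)) :
    ∃ (c : ZMod (p ^ k)) (d : ι → ZMod (p ^ k)), IsDirection d ∧ b = c • d := by
  choose j _ u hu using fun i => exists_eq_unit_mul_prime_pow (b i)
  obtain ⟨i₀, hi₀⟩ := Finite.exists_min j
  refine ⟨p ^ j i₀, fun i => u i * p ^ (j i - j i₀), ⟨i₀, by simp⟩, funext fun i => ?_⟩
  rw [hu i, Pi.smul_apply, smul_eq_mul, mul_left_comm, ← pow_add, Nat.add_sub_cancel' (hi₀ i)]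

theorem dotIndicator_mem_affineHyperplaneSpan_zmod [Nonempty ι] (b : ι → ZMod (p ^ k))
    (e : ZMod (p ^ k)) : dotIndicator K b e ∈ affineHyperplaneSpan K (ZMod (p ^ k)) ι := by
  obtain ⟨c, d, hd, rfl⟩ := exists_eq_smul_isDirection b
  exact dotIndicator_smul_mem_affineHyperplaneSpan hd c e

theorem sliceRestrict_mem_affineHyperplaneSpan {n : ℕ} (hn : 0 < n) (c : ZMod (p ^ k))
    {f : (Fin (n + 1) → ZMod (p ^ k)) → K} (hf : f ∈ linearHyperplaneSpan K _ (Fin (n + 1))) :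
    sliceRestrict K _ n c f ∈ affineHyperplaneSpan K _ (Fin n) := by
  have : Nonempty (Fin n) := ⟨⟨0, hn⟩⟩
  suffices (linearHyperplaneSpan K _ (Fin (n + 1))).map (sliceRestrict K _ n c) ≤
      affineHyperplaneSpan K _ (Fin n) from this (Submodule.mem_map_of_mem hf)
  rw [linearHyperplaneSpan, Submodule.map_span, Submodule.span_le]
  rintro - ⟨-, ⟨b, -, rfl⟩, rfl⟩
  rw [SetLike.mem_coe, sliceRestrict_dotIndicator]
  exact dotIndicator_mem_affineHyperplaneSpan_zmod _ _

theorem eq_zero_of_sliceRestrict_prime_pow_eq_zero {n : ℕ} {f : (Fin (n + 1) → ZMod (p ^ k)) → K}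
    (hf : f ∈ linearHyperplaneSpan K _ (Fin (n + 1)))
    (h : ∀ j ≤ k, sliceRestrict K _ n ((p : ZMod (p ^ k)) ^ j) f = 0) : f = 0 := by
  funext y
  obtain ⟨j, hj, u, hu⟩ := exists_eq_unit_mul_prime_pow (y (Fin.last n))
  have hz : u⁻¹ • y = Fin.snoc (Fin.init (u⁻¹ • y)) ((p : ZMod (p ^ k)) ^ j) := by
    conv_lhs => rw [← Fin.snoc_init_self (u⁻¹ • y)]
    simp [hu, Units.smul_def]
  calc f y = f (u⁻¹ • y) := (apply_unit_smul_of_mem_linearHyperplaneSpan hf u⁻¹ y).symm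
    _ = sliceRestrict K _ n ((p : ZMod (p ^ k)) ^ j) f (Fin.init (u⁻¹ • y)) := congrArg f hz
    _ = 0 := congrFun (h j hj) _

theorem finrank_linearHyperplaneSpan_le {K : Type*} [DivisionRing K] {n : ℕ} (hn : 0 < n) :
    finrank K (linearHyperplaneSpan K (ZMod (p ^ k)) (Fin (n + 1))) ≤
      (k + 1) * finrank K (affineHyperplaneSpan K (ZMod (p ^ k)) (Fin n)) := by
  simpa using finrank_le_card_mul_finrank_of_forall_eq_zero (ι := Fin (k + 1))
    (fun j => sliceRestrict K _ n ((p : ZMod (p ^ k)) ^ (j : ℕ)))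
    (fun _ _ hf => sliceRestrict_mem_affineHyperplaneSpan hn _ hf)
    (fun _ hf h => eq_zero_of_sliceRestrict_prime_pow_eq_zero hf fun j hj =>
      h ⟨j, Nat.lt_succ_of_le hj⟩)

end PrimePow

end HyperplaneIndicators

open HyperplaneIndicators in
theorem stmt_4_general (p k n : ℕ) [Fact p.Prime] (hn : 2 ≤ n) :
    Module.finrank (ZMod p)
      (Submodule.span (ZMod p)
        {f : (Fin n → ZMod (p ^ k)) → ZMod p |
          ∃ (a b : Fin n → ZMod (p ^ k)), (∃ i, IsUnit (b i)) ∧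
            f = fun x => if (∑ i, (x i - a i) * b i) = 0 then 1 else 0}) ≤
    Module.finrank (ZMod p)
      (Submodule.span (ZMod p)
        {f : (Fin (n + 1) → ZMod (p ^ k)) → ZMod p |
          ∃ b : Fin (n + 1) → ZMod (p ^ k), (∃ i, IsUnit (b i)) ∧
            f = fun x => if (∑ i, x i * b i) = 0 then 1 else 0}) ∧
    Module.finrank (ZMod p)
      (Submodule.span (ZMod p)
        {f : (Fin (n + 1) → ZMod (p ^ k)) → ZMod p |
          ∃ b : Fin (n + 1) → ZMod (p ^ k), (∃ i, IsUnit (b i)) ∧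
            f = fun x => if (∑ i, x i * b i) = 0 then 1 else 0}) ≤
    2 * (k + 1) *
      Module.finrank (ZMod p)
        (Submodule.span (ZMod p)
          {f : (Fin n → ZMod (p ^ k)) → ZMod p |
            ∃ (a b : Fin n → ZMod (p ^ k)), (∃ i, IsUnit (b i)) ∧
              f = fun x => if (∑ i, (x i - a i) * b i) = 0 then 1 else 0}) := by
  have hW := finrank_linearHyperplaneSpan_le (K := ZMod p) (p := p) (k := k) (by omega : 0 < n)
  refine ⟨finrank_affineHyperplaneSpan_le n, hW.trans ?_⟩
  rw [mul_assoc]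
  exact Nat.le_mul_of_pos_left _ two_pos

/-- With `A` the dimension of the span of affine-hyperplane indicators in
`R^n` and `W` the dimension of the span of homogeneous-hyperplane indicators in `R^{n+1}`
(`R = ℤ/p^kℤ`, `n ≥ 2`, `k ≥ 1`), one has `A ≤ W ≤ 2(k+1)·A`. -/
theorem stmt_4 (p k n : ℕ) [Fact p.Prime] (hn : 2 ≤ n) (hk : 1 ≤ k) :
    Module.finrank (ZMod p)
      (Submodule.span (ZMod p)
        {f : (Fin n → ZMod (p ^ k)) → ZMod p |
          ∃ (a b : Fin n → ZMod (p ^ k)), (∃ i, IsUnit (b i)) ∧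
            f = fun x => if (∑ i, (x i - a i) * b i) = 0 then 1 else 0}) ≤
    Module.finrank (ZMod p)
      (Submodule.span (ZMod p)
        {f : (Fin (n + 1) → ZMod (p ^ k)) → ZMod p |
          ∃ b : Fin (n + 1) → ZMod (p ^ k), (∃ i, IsUnit (b i)) ∧
            f = fun x => if (∑ i, x i * b i) = 0 then 1 else 0}) ∧
    Module.finrank (ZMod p)
      (Submodule.span (ZMod p)
        {f : (Fin (n + 1) → ZMod (p ^ k)) → ZMod p |
          ∃ b : Fin (n + 1) → ZMod (p ^ k), (∃ i, IsUnit (b i)) ∧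
            f = fun x => if (∑ i, x i * b i) = 0 then 1 else 0}) ≤
    2 * (k + 1) *
      Module.finrank (ZMod p)
        (Submodule.span (ZMod p)
          {f : (Fin n → ZMod (p ^ k)) → ZMod p |
            ∃ (a b : Fin n → ZMod (p ^ k)), (∃ i, IsUnit (b i)) ∧
              f = fun x => if (∑ i, (x i - a i) * b i) = 0 then 1 else 0}) :=
  stmt_4_general p k n hn
end

section
/- Let k ≥ 2 and R = ℤ/p^kℤ. Then the dimension over ℤ/pℤ of the span of the functions x ↦ 1[⟨x,y⟩ = 0 in R] for y ranging over all of R² (inside functions R² → ℤ/pℤ) is strictly greater than the dimension over ℤ/pℤ of the span of the functions x ↦ 1[⟨x,b⟩ = 0 in R] for b ranging only over the directions of R². -/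
/-!
The functional `f ↦ ∑ₜ f (t, 1) + ∑_{u nonunit} f (1, u) - f 0` kills the indicator of `b^⊥` for
every direction `b`: exactly one of the points `(t, 1)`, `(1, u)` is orthogonal to `b`, and the
indicator is `1` at the origin. On the constant function `1`, the indicator of `0^⊥`, it takes the
value `2 |R| - |Rˣ| - 1`, which is `-1` in `ℤ/pℤ` for `R = ℤ/p^kℤ` because `k ≥ 2` makes `p`
divide `|Rˣ| = p^(k-1) (p - 1)`. So the constant function lies in the larger span but not in the
smaller one.
-/

open Finset

section

variable {R K : Type*} [CommRing R] [Field K]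

lemma not_isUnit_of_mul_add_eq_zero {x y z : R} (hy : ¬IsUnit y) (h : x * y + z = 0) :
    ¬IsUnit z := by
  rw [← neg_eq_of_add_eq_zero_right h, IsUnit.neg_iff]
  exact fun hxy => hy (isUnit_of_mul_isUnit_right hxy)

lemma sum_ite_mul_add_eq_zero [DecidableEq R] (s : Finset R) (u : Rˣ) (c : R) :
    (∑ t ∈ s, if t * u + c = 0 then (1 : K) else 0) = if -c * ↑u⁻¹ ∈ s then 1 else 0 := by
  simp_rw [add_eq_zero_iff_eq_neg, ← Units.eq_mul_inv_iff_mul_eq]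
  exact sum_ite_eq' s _ _

variable [Fintype R] [DecidableEq R]

lemma card_filter_not_isUnit_add_card_units :
    #{u : R | ¬IsUnit u} + Fintype.card Rˣ = Fintype.card R := by
  have : #{u : R | IsUnit u} = Fintype.card Rˣ := by
    rw [← card_univ, ← card_map ⟨Units.val, Units.val_injective⟩]
    congr 1
    ext u
    simp [IsUnit, eq_comm]
  rw [← this, add_comm, card_filter_add_card_filter_not, card_univ]

def orthIndicator (y : Fin 2 → R) : (Fin 2 → R) → K :=
  fun x => if ∑ i, x i * y i = 0 then 1 else 0

open Classical in
noncomputable def projLineFunctional : ((Fin 2 → R) → K) →ₗ[K] K :=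
  ∑ t : R, LinearMap.proj ![t, 1] + ∑ u ∈ {u : R | ¬IsUnit u}, LinearMap.proj ![1, u] -
    LinearMap.proj 0

open Classical in
lemma projLineFunctional_apply (f : (Fin 2 → R) → K) :
    projLineFunctional f = ∑ t : R, f ![t, 1] + ∑ u ∈ {u : R | ¬IsUnit u}, f ![1, u] - f 0 := by
  simp [projLineFunctional]

lemma projLineFunctional_orthIndicator {b : Fin 2 → R} (hb : ∃ i, IsUnit (b i)) :
    projLineFunctional (orthIndicator (K := K) b) = 0 := by
  classical
  simp only [projLineFunctional_apply, orthIndicator, Fin.sum_univ_two, Matrix.cons_val_zero,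
    Matrix.cons_val_one, Matrix.cons_val_fin_one, one_mul, Pi.zero_apply, zero_mul, add_zero,
    if_true]
  by_cases h0 : IsUnit (b 0)
  · obtain ⟨u0, hu0⟩ := h0
    have hN : ∑ u ∈ {u : R | ¬IsUnit u}, (if b 0 + u * b 1 = 0 then (1 : K) else 0) = 0 := by
      refine sum_eq_zero fun u hu => if_neg fun h => ?_
      rw [add_comm, mul_comm] at h
      exact not_isUnit_of_mul_add_eq_zero (mem_filter.mp hu).2 h ⟨u0, hu0⟩
    rw [hN, ← hu0, sum_ite_mul_add_eq_zero, if_pos (mem_univ _)]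
    ring
  · obtain ⟨u1, hu1⟩ : IsUnit (b 1) := by
      obtain ⟨i, hi⟩ := hb
      fin_cases i
      exacts [absurd hi h0, hi]
    have hT : ∑ t : R, (if t * b 0 + b 1 = 0 then (1 : K) else 0) = 0 :=
      sum_eq_zero fun t _ => if_neg fun h => not_isUnit_of_mul_add_eq_zero h0 h ⟨u1, hu1⟩
    simp_rw [hT, add_comm (b 0), ← hu1]
    rw [sum_ite_mul_add_eq_zero, if_pos]
    · ring
    · simpa [hu1] using h0

lemma projLineFunctional_orthIndicator_zero :
    projLineFunctional (orthIndicator (K := K) (0 : Fin 2 → R)) =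
      2 * Fintype.card R - Fintype.card Rˣ - 1 := by
  classical
  have hcard := congrArg (Nat.cast (R := K)) (card_filter_not_isUnit_add_card_units (R := R))
  push_cast at hcard
  simp only [projLineFunctional_apply, orthIndicator, Pi.zero_apply, mul_zero, sum_const_zero,
    if_true, sum_const, card_univ, nsmul_one]
  rw [← hcard]
  ring

theorem finrank_span_orthIndicator_directions_lt (hR : (Fintype.card R : K) = 0)
    (hRu : (Fintype.card Rˣ : K) = 0) :
    Module.finrank K (Submodule.span K
        {f : (Fin 2 → R) → K | ∃ b : Fin 2 → R, (∃ i, IsUnit (b i)) ∧ f = orthIndicator b}) <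
      Module.finrank K (Submodule.span K
        {f : (Fin 2 → R) → K | ∃ y : Fin 2 → R, f = orthIndicator y}) := by
  refine Submodule.finrank_lt_finrank_of_lt (SetLike.lt_iff_le_and_exists.mpr
    ⟨Submodule.span_mono fun f ⟨b, _, hf⟩ => ⟨b, hf⟩,
      orthIndicator 0, Submodule.subset_span ⟨0, rfl⟩, fun h => ?_⟩)
  have hker : orthIndicator 0 ∈ LinearMap.ker (projLineFunctional (R := R) (K := K)) := by
    refine Submodule.span_le.mpr ?_ h
    rintro _ ⟨_, hb, rfl⟩
    exact projLineFunctional_orthIndicator hb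
  rw [LinearMap.mem_ker, projLineFunctional_orthIndicator_zero, hR, hRu] at hker
  simp at hker

end

/-- For `k ≥ 2` and `R = ℤ/p^kℤ`, the dimension of the span of the functions
`x ↦ 1[⟨x,y⟩ = 0]` on `R²` over all `y ∈ R²` is strictly greater than the dimension of the
span of the functions `x ↦ 1[⟨x,b⟩ = 0]` over directions `b` only. -/
theorem stmt_5 (p k : ℕ) [Fact p.Prime] (hk : 2 ≤ k) :
    Module.finrank (ZMod p)
      (Submodule.span (ZMod p)
        {f : (Fin 2 → ZMod (p ^ k)) → ZMod p |
          ∃ b : Fin 2 → ZMod (p ^ k), (∃ i, IsUnit (b i)) ∧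
            f = fun x => if (∑ i, x i * b i) = 0 then 1 else 0}) <
    Module.finrank (ZMod p)
      (Submodule.span (ZMod p)
        {f : (Fin 2 → ZMod (p ^ k)) → ZMod p |
          ∃ y : Fin 2 → ZMod (p ^ k),
            f = fun x => if (∑ i, x i * y i) = 0 then 1 else 0}) := by
  apply finrank_span_orthIndicator_directions_lt
  · rw [ZMod.card, Nat.cast_pow, ZMod.natCast_self, zero_pow (by omega)]
  · rw [ZMod.card_units_eq_totient, Nat.totient_prime_pow Fact.out (by omega), Nat.cast_mul,
      Nat.cast_pow, ZMod.natCast_self, zero_pow (by omega), zero_mul]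
end

section
/- Let p be prime, k ≥ 1, and m a natural number with m < p^k. If x, y are nonnegative integers with x ≡ y (mod p^k), then C(x, m) ≡ C(y, m) (mod p), where C denotes the binomial coefficient. -/
/-!
By Lucas's theorem, for `m < p ^ k` the residue of `C(n, m)` modulo `p` is the product of
`C(nᵢ, mᵢ)` over the lowest `k` base-`p` digits, and those digits of `n` are determined by
`n mod p ^ k`.
-/

open Finset

theorem Nat.div_pow_mod_eq_of_modEq {p k i x y : ℕ} (h : x ≡ y [MOD p ^ k]) (hi : i < k) :
    x / p ^ i % p = y / p ^ i % p := by
  have hdvd : p ^ (i + 1) ∣ p ^ k := Nat.pow_dvd_pow p hi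
  rw [← Nat.mod_mul_right_div_self, ← Nat.mod_mul_right_div_self, ← pow_succ,
    ← Nat.mod_mod_of_dvd x hdvd, ← Nat.mod_mod_of_dvd y hdvd, h]

theorem Choose.choose_modEq_prod_range_choose_of_lt {p k n m : ℕ} [Fact p.Prime]
    (hm : m < p ^ k) :
    n.choose m ≡ ∏ i ∈ range k, (n / p ^ i % p).choose (m / p ^ i % p) [MOD p] := by
  rw [← Int.natCast_modEq_iff]
  have lucas := Choose.choose_modEq_choose_mul_prod_range_choose (n := n) (k := m) (p := p) k
  rwa [Nat.div_eq_of_lt hm, Nat.choose_zero_right, Nat.cast_one, one_mul] at lucas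

theorem stmt_6_general (p k m x y : ℕ) (hp : p.Prime) (hm : m < p ^ k)
    (h : x ≡ y [MOD p ^ k]) : x.choose m ≡ y.choose m [MOD p] := by
  have : Fact p.Prime := ⟨hp⟩
  calc x.choose m
      ≡ ∏ i ∈ range k, (x / p ^ i % p).choose (m / p ^ i % p) [MOD p] :=
        Choose.choose_modEq_prod_range_choose_of_lt hm
    _ = ∏ i ∈ range k, (y / p ^ i % p).choose (m / p ^ i % p) :=
        prod_congr rfl fun i hi => by rw [Nat.div_pow_mod_eq_of_modEq h (mem_range.mp hi)]
    _ ≡ y.choose m [MOD p] := (Choose.choose_modEq_prod_range_choose_of_lt hm).symm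

/-- If `p` is prime, `k ≥ 1`, `m < p^k`, and `x ≡ y (mod p^k)` for
nonnegative integers `x, y`, then `C(x,m) ≡ C(y,m) (mod p)`. -/
theorem stmt_6 (p k m x y : ℕ) (hp : p.Prime) (hk : 1 ≤ k) (hm : m < p ^ k)
    (h : x ≡ y [MOD p ^ k]) : x.choose m ≡ y.choose m [MOD p] :=
  stmt_6_general p k m x y hp hm h
end

section
/- The family of functions {φ_m : 0 ≤ m ≤ p^k − 1} is linearly independent over ℤ/pℤ, and it spans the space of all functions R → ℤ/pℤ; that is, it forms a ℤ/pℤ-basis of that function space. -/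
/-!
Evaluating `φ_j` at the residues `0, 1, …, p^k − 1` gives the matrix `(C(i, j) mod p)`, which is
lower unitriangular, so the `φ_j` are linearly independent. There are `p^k` of them, the dimension
of the space of functions `ℤ/p^kℤ → ℤ/pℤ`, so they also span it.
-/

/-- The binomial phi function `φ_m : ℤ/p^kℤ → ℤ/pℤ`, `φ_m(x) = C(x̄, m) mod p`. -/
def phi (p k m : ℕ) (x : ZMod (p ^ k)) : ZMod p := (x.val.choose m : ZMod p)

theorem linearIndependent_of_eval_lowerTriangular {ι α R : Type*} [Fintype ι] [LinearOrder ι]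
    [CommRing R] [IsDomain R] {v : ι → α → R} (x : ι → α)
    (hlt : ∀ i j, i < j → v j (x i) = 0) (hdiag : ∀ i, v i (x i) ≠ 0) :
    LinearIndependent R v := by
  classical
  let M : Matrix ι ι R := Matrix.of fun i j => v j (x i)
  have hM : M.IsLowerTriangular := hlt
  have hdet : M.det ≠ 0 := by
    rw [Matrix.det_of_isLowerTriangular M hM]
    exact Finset.prod_ne_zero_iff.mpr fun i _ => hdiag i
  exact (Matrix.linearIndependent_cols_of_det_ne_zero hdet).of_comp (LinearMap.funLeft R R x)

theorem phi_natCast_of_lt {p k n : ℕ} (m : ℕ) (hn : n < p ^ k) :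
    phi p k m n = (n.choose m : ZMod p) := by
  rw [phi, ZMod.val_natCast_of_lt hn]

theorem linearIndependent_phi (p k : ℕ) [Fact p.Prime] :
    LinearIndependent (ZMod p) (fun m : Fin (p ^ k) => phi p k m.val) := by
  refine linearIndependent_of_eval_lowerTriangular (fun i : Fin (p ^ k) => (i.val : ZMod (p ^ k)))
    (fun i j hij => ?_) (fun i => ?_)
  · simp [phi_natCast_of_lt _ i.isLt, Nat.choose_eq_zero_of_lt (show i.val < j.val from hij)]
  · simp [phi_natCast_of_lt _ i.isLt]

theorem stmt_7_general (p k : ℕ) [Fact p.Prime] :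
    LinearIndependent (ZMod p) (fun m : Fin (p ^ k) => phi p k m.val) ∧
    Submodule.span (ZMod p) (Set.range (fun m : Fin (p ^ k) => phi p k m.val)) = ⊤ := by
  have hli := linearIndependent_phi p k
  refine ⟨hli, hli.span_eq_top_of_card_eq_finrank ?_⟩
  simp [Module.finrank_fintype_fun_eq_card, ZMod.card]

/-- The family `{φ_m : 0 ≤ m ≤ p^k − 1}` is linearly independent over
`ℤ/pℤ` and spans the space of all functions `R → ℤ/pℤ`. -/
theorem stmt_7 (p k : ℕ) [Fact p.Prime] (hk : 1 ≤ k) :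
    LinearIndependent (ZMod p) (fun m : Fin (p ^ k) => phi p k m.val) ∧
    Submodule.span (ZMod p) (Set.range (fun m : Fin (p ^ k) => phi p k m.val)) = ⊤ :=
  stmt_7_general p k
end

section
/- (Vandermonde's identity for the φ functions.) For every natural number m with m < p^k and all x, y ∈ R, one has φ_m(x+y) = Σ_{i=0}^{m} φ_i(x)·φ_{m−i}(y), the equality holding in ℤ/pℤ (here x+y is computed in R = ℤ/p^kℤ). -/
theorem Nat.cast_choose_add_prime_pow {p : ℕ} [hp : Fact p.Prime] (k n : ℕ) {m : ℕ}
    (hm : m < p ^ k) : ((n + p ^ k).choose m : ZMod p) = n.choose m := by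
  rw [Nat.add_choose_eq, Nat.cast_sum, Finset.sum_eq_single (⟨m, 0⟩ : ℕ × ℕ)]
  · simp
  · rintro ⟨i, j⟩ hij hne
    have hj : j ≠ 0 := by
      rintro rfl
      exact hne (by simpa using hij)
    have hjm : j ≤ m := by
      have := Finset.HasAntidiagonal.mem_antidiagonal.mp hij
      omega
    have hdvd : p ∣ (p ^ k).choose j := hp.out.dvd_choose_pow hj (by omega)
    rw [Nat.cast_mul, (ZMod.natCast_eq_zero_iff _ _).2 hdvd, mul_zero]
  · simp

theorem phi_add {p : ℕ} [Fact p.Prime] {k m : ℕ} (hm : m < p ^ k) (x y : ZMod (p ^ k)) :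
    phi p k m (x + y) = ((x.val + y.val).choose m : ZMod p) := by
  rcases lt_or_ge (x.val + y.val) (p ^ k) with h | h
  · rw [phi, ZMod.val_add_of_lt h]
  · rw [phi, ZMod.val_add_of_le h, ← Nat.cast_choose_add_prime_pow k _ hm, Nat.sub_add_cancel h]

theorem stmt_8_general (p k m : ℕ) [Fact p.Prime] (hm : m < p ^ k)
    (x y : ZMod (p ^ k)) :
    phi p k m (x + y) = ∑ i ∈ Finset.range (m + 1), phi p k i x * phi p k (m - i) y := by
  rw [phi_add hm, Nat.add_choose_eq,
    Finset.Nat.sum_antidiagonal_eq_sum_range_succ (fun i j => x.val.choose i * y.val.choose j)]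
  push_cast
  rfl

/-- **Vandermonde's identity for phi functions.** For `m < p^k` and
`x, y ∈ R = ℤ/p^kℤ`, `φ_m(x+y) = Σ_{i=0}^{m} φ_i(x)·φ_{m−i}(y)` in `ℤ/pℤ`. -/
theorem stmt_8 (p k m : ℕ) [Fact p.Prime] (hk : 1 ≤ k) (hm : m < p ^ k)
    (x y : ZMod (p ^ k)) :
    phi p k m (x + y) = ∑ i ∈ Finset.range (m + 1), phi p k i x * phi p k (m - i) y :=
  stmt_8_general p k m hm x y
end

section
/- Let 1 ≤ j ≤ k−1. For every natural number m with m < p^{k−j} and every x ∈ R, one has φ_{p^j·m}(p^j·x) = φ_m(x) (the product p^j·x computed in R = ℤ/p^kℤ). Moreover, for any natural number m not divisible by p^j and any x ∈ R, φ_m(p^j·x) = 0. -/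
namespace Choose

theorem cast_choose_eq_choose_mod_pow_mul_choose_div_pow (p : ℕ) [Fact p.Prime] (a n k : ℕ) :
    (n.choose k : ZMod p) =
      (n % p ^ a).choose (k % p ^ a) * (n / p ^ a).choose (k / p ^ a) := by
  have lucas (n k : ℕ) :
      (n.choose k : ZMod p) = (n % p).choose (k % p) * (n / p).choose (k / p) := by
    exact_mod_cast (ZMod.natCast_eq_natCast_iff _ _ _).mpr
      choose_modEq_choose_mod_mul_choose_div_nat
  induction a generalizing n k with
  | zero => simp [Nat.mod_one]
  | succ a ih =>
    rw [lucas n k, ih (n / p) (k / p), lucas (n % p ^ (a + 1)), pow_succ', Nat.mod_mul_right_mod,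
      Nat.mod_mul_right_mod, Nat.mod_mul_right_div_self, Nat.mod_mul_right_div_self,
      Nat.div_div_eq_div_mul, Nat.div_div_eq_div_mul]
    ring

end Choose

theorem ZMod.val_natCast_mul {n a b : ℕ} [NeZero n] (h : n = a * b) (x : ZMod n) :
    ((a : ZMod n) * x).val = a * (x.val % b) := by
  have hcast : (a : ZMod n) * x = ((a * x.val : ℕ) : ZMod n) := by
    rw [Nat.cast_mul, ZMod.natCast_zmod_val]
  subst h
  rw [hcast, ZMod.val_natCast, Nat.mul_mod_mul_left]

theorem stmt_9_general (p k j : ℕ) [Fact p.Prime] (hj2 : j ≤ k - 1) :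
    (∀ m < p ^ (k - j), ∀ x : ZMod (p ^ k),
      phi p k (p ^ j * m) ((p ^ j : ZMod (p ^ k)) * x) = phi p k m x) ∧
    (∀ m : ℕ, ¬ (p ^ j ∣ m) → ∀ x : ZMod (p ^ k),
      phi p k m ((p ^ j : ZMod (p ^ k)) * x) = 0) := by
  have hpk : p ^ k = p ^ j * p ^ (k - j) := by rw [← pow_add]; congr 1; omega
  refine ⟨fun m hm x => ?_, fun m hm x => ?_⟩
  · rw [phi, phi, ← Nat.cast_pow, ZMod.val_natCast_mul hpk]
    calc ((p ^ j * (x.val % p ^ (k - j))).choose (p ^ j * m) : ZMod p)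
        = ((x.val % p ^ (k - j)).choose m : ZMod p) :=
          (ZMod.natCast_eq_natCast_iff _ _ _).mpr Choose.choose_pow_mul_pow_mul_modEq_choose_nat
      _ = (x.val.choose m : ZMod p) := by
          rw [Choose.cast_choose_eq_choose_mod_pow_mul_choose_div_pow p (k - j) x.val m,
            Nat.mod_eq_of_lt hm, Nat.div_eq_of_lt hm, Nat.choose_zero_right, Nat.cast_one, mul_one]
  · have hmod : 0 < m % p ^ j := Nat.pos_of_ne_zero (mt Nat.dvd_of_mod_eq_zero hm)
    rw [phi, ← Nat.cast_pow, ZMod.val_natCast_mul hpk,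
      Choose.cast_choose_eq_choose_mod_pow_mul_choose_div_pow p j, Nat.mul_mod_right,
      Nat.choose_eq_zero_of_lt hmod, Nat.cast_zero, zero_mul]

/-- For `1 ≤ j ≤ k−1`: if `m < p^{k−j}` then
`φ_{p^j·m}(p^j·x) = φ_m(x)` for all `x ∈ R`; and if `p^j ∤ m` then `φ_m(p^j·x) = 0`. -/
theorem stmt_9 (p k j : ℕ) [Fact p.Prime] (hj1 : 1 ≤ j) (hj2 : j ≤ k - 1) :
    (∀ m < p ^ (k - j), ∀ x : ZMod (p ^ k),
      phi p k (p ^ j * m) ((p ^ j : ZMod (p ^ k)) * x) = phi p k m x) ∧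
    (∀ m : ℕ, ¬ (p ^ j ∣ m) → ∀ x : ZMod (p ^ k),
      phi p k m ((p ^ j : ZMod (p ^ k)) * x) = 0) :=
  stmt_9_general p k j hj2
end

section
/- Let m be a natural number with m < p^k and let f : R → ℤ/pℤ. The following are equivalent: (i) f ∈ Ω_{m−1}; (ii) D^m f = 0, where D^m denotes the m-fold iterate of D; (iii) for every choice of c_1, …, c_m ∈ R, the iterated difference Δ_{c_m}∘⋯∘Δ_{c_1} f is identically 0. -/
open Polynomial Finset fwdDiff

theorem Nat.cast_choose_add_expChar_pow {R : Type*} [CommSemiring R] (p : ℕ) [ExpChar R p]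
    {k i : ℕ} (hi : i < p ^ k) (a : ℕ) : ((a + p ^ k).choose i : R) = a.choose i := by
  have h := congrArg (coeff · i) (show (1 + X : R[X]) ^ (a + p ^ k) =
      (1 + X) ^ a + (1 + X) ^ a * X ^ p ^ k by
    rw [pow_add, add_pow_expChar_pow, one_pow, mul_add, mul_one])
  simpa [coeff_one_add_X_pow, coeff_mul_X_pow', hi.not_ge] using h

theorem Nat.cast_choose_mod_expChar_pow {R : Type*} [CommSemiring R] (p : ℕ) [ExpChar R p]
    {k i : ℕ} (hi : i < p ^ k) (a : ℕ) : ((a % p ^ k).choose i : R) = a.choose i :=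
  Function.Periodic.map_mod_nat (f := fun a => (a.choose i : R))
    (Nat.cast_choose_add_expChar_pow p hi) a

theorem List.foldr_replicate_eq_iterate {α β : Type*} (g : α → β → β) (a : α) (b : β) (m : ℕ) :
    (List.replicate m a).foldr g b = (g a)^[m] b := by
  induction m with
  | zero => rfl
  | succ m ih => rw [List.replicate_succ, List.foldr_cons, ih, Function.iterate_succ_apply']

/-- `fwdDiff h` as an `R`-linear map; Mathlib's `fwdDiffₗ` is only `ℤ`-linear. -/
def fwdDiffLinearMap (R : Type*) {M G : Type*} [AddCommMonoid M] [AddCommGroup G] [Semiring R]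
    [Module R G] (h : M) : (M → G) →ₗ[R] (M → G) where
  toFun := fwdDiff h
  map_add' := fwdDiff_add h
  map_smul' := fwdDiff_const_smul h

theorem eq_const_of_fwdDiff_one_eq_zero {n : ℕ} [NeZero n] {G : Type*} [AddCommGroup G]
    {f : ZMod n → G} (hf : Δ_[1] f = 0) : f = fun _ => f 0 := by
  have hper : Function.Periodic f 1 := fun x => sub_eq_zero.mp (congrFun hf x)
  funext x
  simpa using hper.nat_mul_eq x.val

/-- The paper's `Ω_(n-1)`. -/
def phiSpan (p k n : ℕ) : Submodule (ZMod p) (ZMod (p ^ k) → ZMod p) :=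
  Submodule.span (ZMod p) {g | ∃ i < n, g = phi p k i}

section
variable {p k : ℕ} [Fact p.Prime]

theorem phi_add_s10 {i : ℕ} (hi : i < p ^ k) (x s : ZMod (p ^ k)) :
    phi p k i (x + s) = ∑ j ∈ range (i + 1), (s.val.choose (i - j) : ZMod p) * phi p k j x := by
  rw [phi, ZMod.val_add, Nat.cast_choose_mod_expChar_pow p hi, Nat.add_choose_eq,
    Nat.sum_antidiagonal_eq_sum_range_succ (fun a b => x.val.choose a * s.val.choose b)]
  push_cast
  exact sum_congr rfl fun j _ => mul_comm _ _

theorem fwdDiff_phi {i : ℕ} (hi : i < p ^ k) (s : ZMod (p ^ k)) :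
    Δ_[s] (phi p k i) = ∑ j ∈ range i, (s.val.choose (i - j) : ZMod p) • phi p k j := by
  funext x
  rw [fwdDiff, phi_add_s10 hi, sum_range_succ, Nat.sub_self, Nat.choose_zero_right, Nat.cast_one,
    one_mul, add_sub_cancel_right, Finset.sum_apply]
  rfl

theorem fwdDiff_one_phi_succ {i : ℕ} (hi : i + 1 < p ^ k) :
    Δ_[1] (phi p k (i + 1)) = phi p k i := by
  have hval : (1 : ZMod (p ^ k)).val = 1 := by
    rw [ZMod.val_one_eq_one_mod, Nat.mod_eq_of_lt (by omega)]
  rw [fwdDiff_phi hi, sum_eq_single_of_mem i (self_mem_range_succ i), hval,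
    Nat.add_sub_cancel_left, Nat.choose_self, Nat.cast_one, one_smul]
  intro j hj hji
  rw [hval, Nat.choose_eq_zero_of_lt (by simp at hj; omega), Nat.cast_zero, zero_smul]

theorem phiSpan_le_comap_fwdDiff {n : ℕ} (hn : n ≤ p ^ k) (s : ZMod (p ^ k)) :
    phiSpan p k n ≤ (phiSpan p k (n - 1)).comap (fwdDiffLinearMap (ZMod p) s) := by
  refine Submodule.span_le.mpr ?_
  rintro _ ⟨i, hin, rfl⟩
  change Δ_[s] (phi p k i) ∈ phiSpan p k (n - 1)
  rw [fwdDiff_phi (hin.trans_le hn)]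
  refine Submodule.sum_mem _ fun j hj => Submodule.smul_mem _ _ (Submodule.subset_span ?_)
  exact ⟨j, by simp at hj; omega, rfl⟩

theorem phiSpan_le_map_fwdDiff_one {n : ℕ} (hn : n + 1 ≤ p ^ k) :
    phiSpan p k n ≤ (phiSpan p k (n + 1)).map (fwdDiffLinearMap (ZMod p) 1) := by
  refine Submodule.span_le.mpr ?_
  rintro _ ⟨i, hin, rfl⟩
  exact ⟨phi p k (i + 1), Submodule.subset_span ⟨i + 1, by omega, rfl⟩,
    fwdDiff_one_phi_succ (by omega)⟩

theorem foldr_fwdDiff_mem_phiSpan {n : ℕ} (hn : n ≤ p ^ k) {f : ZMod (p ^ k) → ZMod p}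
    (hf : f ∈ phiSpan p k n) (c : List (ZMod (p ^ k))) :
    c.foldr fwdDiff f ∈ phiSpan p k (n - c.length) := by
  induction c with
  | nil => exact hf
  | cons s c ih =>
    rw [List.length_cons, ← Nat.sub_sub]
    exact phiSpan_le_comap_fwdDiff (by omega) s ih

theorem mem_phiSpan_succ_of_fwdDiff_one_mem {n : ℕ} (hn : n + 1 ≤ p ^ k)
    {f : ZMod (p ^ k) → ZMod p} (hf : Δ_[1] f ∈ phiSpan p k n) : f ∈ phiSpan p k (n + 1) := by
  obtain ⟨g, hg, hgf⟩ := phiSpan_le_map_fwdDiff_one hn hf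
  have hdiff : Δ_[1] (f - g) = 0 :=
    (map_sub (fwdDiffLinearMap (ZMod p) 1) f g).trans (sub_eq_zero.mpr hgf.symm)
  have hconst : f - g = (f - g) 0 • phi p k 0 := by
    rw [eq_const_of_fwdDiff_one_eq_zero hdiff]
    funext x
    simp [phi]
  have hfg : f - g ∈ phiSpan p k (n + 1) :=
    hconst ▸ Submodule.smul_mem _ _ (Submodule.subset_span ⟨0, by omega, rfl⟩)
  simpa using Submodule.add_mem _ hg hfg

theorem mem_phiSpan_of_iterate_fwdDiff_one_eq_zero {n : ℕ} (hn : n ≤ p ^ k)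
    {f : ZMod (p ^ k) → ZMod p} (hf : (fwdDiff 1)^[n] f = 0) : f ∈ phiSpan p k n := by
  induction n generalizing f with
  | zero => exact (show f = 0 from hf) ▸ zero_mem _
  | succ n ih =>
    exact mem_phiSpan_succ_of_fwdDiff_one_mem hn (ih (by omega) hf)

end

theorem stmt_10_general (p k m : ℕ) [Fact p.Prime] (hm : m < p ^ k)
    (f : ZMod (p ^ k) → ZMod p) :
    (f ∈ Submodule.span (ZMod p) {g : ZMod (p ^ k) → ZMod p | ∃ i < m, g = phi p k i} ↔
      (fun g : ZMod (p ^ k) → ZMod p => fun x => g (x + 1) - g x)^[m] f = 0) ∧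
    (f ∈ Submodule.span (ZMod p) {g : ZMod (p ^ k) → ZMod p | ∃ i < m, g = phi p k i} ↔
      ∀ c : List (ZMod (p ^ k)), c.length = m →
        c.foldr (fun s g => fun x => g (x + s) - g x) f = 0) := by
  have span_to_diffs (hf : f ∈ phiSpan p k m) (c : List (ZMod (p ^ k))) (hc : c.length = m) :
      c.foldr fwdDiff f = 0 := by
    simpa [hc, phiSpan] using foldr_fwdDiff_mem_phiSpan hm.le hf c
  have diffs_to_iterate (h : ∀ c : List (ZMod (p ^ k)), c.length = m → c.foldr fwdDiff f = 0) :
      (fwdDiff 1)^[m] f = 0 := by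
    simpa [List.foldr_replicate_eq_iterate] using h (List.replicate m 1) List.length_replicate
  have iterate_to_span : (fwdDiff 1)^[m] f = 0 → f ∈ phiSpan p k m :=
    mem_phiSpan_of_iterate_fwdDiff_one_eq_zero hm.le
  exact ⟨⟨diffs_to_iterate ∘ span_to_diffs, iterate_to_span⟩,
    ⟨span_to_diffs, iterate_to_span ∘ diffs_to_iterate⟩⟩

/-- For `m < p^k` and `f : R → ℤ/pℤ`, the following are equivalent:
(i) `f ∈ Ω_{m−1} = span{φ_i : i < m}`; (ii) `D^m f = 0` where `Df(x) = f(x+1) − f(x)`;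
(iii) for every choice of steps `c_1, …, c_m ∈ R`, `Δ_{c_m}∘⋯∘Δ_{c_1} f ≡ 0`. -/
theorem stmt_10 (p k m : ℕ) [Fact p.Prime] (hk : 1 ≤ k) (hm : m < p ^ k)
    (f : ZMod (p ^ k) → ZMod p) :
    (f ∈ Submodule.span (ZMod p) {g : ZMod (p ^ k) → ZMod p | ∃ i < m, g = phi p k i} ↔
      (fun g : ZMod (p ^ k) → ZMod p => fun x => g (x + 1) - g x)^[m] f = 0) ∧
    (f ∈ Submodule.span (ZMod p) {g : ZMod (p ^ k) → ZMod p | ∃ i < m, g = phi p k i} ↔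
      ∀ c : List (ZMod (p ^ k)), c.length = m →
        c.foldr (fun s g => fun x => g (x + s) - g x) f = 0) :=
  stmt_10_general p k m hm f
end

section
/- Let 0 ≤ ℓ ≤ k−1 and let f : R → ℤ/pℤ. Then f ∈ Ω_{p^ℓ−1} if and only if f factors through reduction modulo p^ℓ, i.e., there exists g : ℤ/p^ℓℤ → ℤ/pℤ such that f(x) = g(x mod p^ℓ) for all x ∈ R. -/
open Finset

theorem Choose.choose_modEq_choose_mod_pow {p : ℕ} [Fact p.Prime] {l i : ℕ} (hi : i < p ^ l)
    (n : ℕ) : n.choose i ≡ (n % p ^ l).choose i [ZMOD p] := by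
  have hdigit : ∀ j ∈ range l, n % p ^ l / p ^ j % p = n / p ^ j % p := fun j hj => by
    have hjl : p ^ l = p ^ j * p ^ (l - j) := by
      rw [← pow_add, Nat.add_sub_cancel' (mem_range.mp hj).le]
    rw [hjl, Nat.mod_mul_right_div_self,
      Nat.mod_mod_of_dvd _ (dvd_pow_self p (Nat.sub_ne_zero_of_lt (mem_range.mp hj)))]
  have hn := Choose.choose_modEq_choose_mul_prod_range_choose (p := p) (n := n) (k := i) l
  have hnl :=
    Choose.choose_modEq_choose_mul_prod_range_choose (p := p) (n := n % p ^ l) (k := i) l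
  rw [Nat.div_eq_of_lt hi, Nat.choose_zero_right] at hn hnl
  rw [prod_congr rfl fun j hj => by rw [hdigit j hj]] at hnl
  exact hn.trans hnl.symm

theorem phi_eq_comp_castHom (p : ℕ) [Fact p.Prime] {k l i : ℕ} (hlk : l ≤ k)
    (hi : i < p ^ l) :
    phi p k i = phi p l i ∘ ZMod.castHom (pow_dvd_pow p hlk) (ZMod (p ^ l)) := by
  funext x
  have hval : (ZMod.castHom (pow_dvd_pow p hlk) (ZMod (p ^ l)) x).val = x.val % p ^ l := by
    rw [ZMod.castHom_apply, ← ZMod.natCast_val, ZMod.val_natCast]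
  rw [Function.comp_apply, phi, phi, hval]
  exact_mod_cast (ZMod.intCast_eq_intCast_iff _ _ _).mpr
    (Choose.choose_modEq_choose_mod_pow hi x.val)

section ChooseSpan

variable {N : ℕ} [NeZero N] (R : Type*) [Ring R]

theorem choose_val_eq_sum_single (i : ℕ) :
    (fun y : ZMod N => (y.val.choose i : R)) =
      ∑ b : ZMod N, (b.val.choose i : R) • Pi.single b 1 := by
  conv_lhs => rw [← Finset.univ_sum_single (fun y : ZMod N => (y.val.choose i : R))]
  simp only [← Pi.single_smul, smul_eq_mul, mul_one]

theorem single_mem_span_choose_val (a : ZMod N) :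
    Pi.single a 1 ∈
      Submodule.span R {g : ZMod N → R | ∃ i < N, g = fun y => (y.val.choose i : R)} := by
  induction hd : N - a.val using Nat.strong_induction_on generalizing a with
  | _ d ih =>
  have hsplit := choose_val_eq_sum_single R (N := N) a.val
  rw [← Finset.add_sum_erase _ _ (mem_univ a), Nat.choose_self, Nat.cast_one, one_smul] at hsplit
  rw [eq_sub_of_add_eq hsplit.symm]
  refine sub_mem (Submodule.subset_span ⟨a.val, a.val_lt, rfl⟩) (sum_mem fun b hb => ?_)
  rcases lt_or_gt_of_ne (ZMod.val_injective N |>.ne (ne_of_mem_erase hb)) with hlt | hgt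
  · rw [Nat.choose_eq_zero_of_lt hlt, Nat.cast_zero, zero_smul]
    exact zero_mem _
  · exact Submodule.smul_mem _ _ (ih (N - b.val) (by have := b.val_lt; omega) b rfl)

theorem span_choose_val_eq_top :
    Submodule.span R {g : ZMod N → R | ∃ i < N, g = fun y => (y.val.choose i : R)} = ⊤ := by
  refine Submodule.eq_top_iff'.mpr fun h => ?_
  rw [← Finset.univ_sum_single h]
  refine sum_mem fun a _ => ?_
  rw [← mul_one (h a), ← smul_eq_mul, Pi.single_smul]
  exact Submodule.smul_mem _ _ (single_mem_span_choose_val R a)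

end ChooseSpan

theorem span_phi_eq_range_funLeft (p : ℕ) [Fact p.Prime] {k l : ℕ} (hlk : l ≤ k) :
    Submodule.span (ZMod p) {g : ZMod (p ^ k) → ZMod p | ∃ i < p ^ l, g = phi p k i} =
      LinearMap.range (LinearMap.funLeft (ZMod p) (ZMod p)
        (ZMod.castHom (pow_dvd_pow p hlk) (ZMod (p ^ l)))) := by
  rw [LinearMap.range_eq_map, ← span_choose_val_eq_top (ZMod p), Submodule.map_span]
  congr 1
  ext g
  simp only [Set.mem_ofPred_eq, Set.mem_image]
  constructor
  · rintro ⟨i, hi, rfl⟩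
    exact ⟨phi p l i, ⟨i, hi, rfl⟩, (phi_eq_comp_castHom p hlk hi).symm⟩
  · rintro ⟨_, ⟨i, hi, rfl⟩, rfl⟩
    exact ⟨i, hi, (phi_eq_comp_castHom p hlk hi).symm⟩

theorem stmt_11_general (p k l : ℕ) [Fact p.Prime] (hl : l ≤ k - 1)
    (f : ZMod (p ^ k) → ZMod p) :
    f ∈ Submodule.span (ZMod p) {g : ZMod (p ^ k) → ZMod p | ∃ i < p ^ l, g = phi p k i} ↔
    ∃ g : ZMod (p ^ l) → ZMod p, ∀ x : ZMod (p ^ k),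
      f x = g (ZMod.castHom (pow_dvd_pow p (le_trans hl (Nat.sub_le k 1)))
        (ZMod (p ^ l)) x) := by
  rw [span_phi_eq_range_funLeft p (le_trans hl (Nat.sub_le k 1)), LinearMap.mem_range]
  simp only [funext_iff, LinearMap.funLeft_apply, eq_comm]

/-- For `0 ≤ ℓ ≤ k−1` and `f : R → ℤ/pℤ`: `f ∈ Ω_{p^ℓ−1}` iff `f`
factors through reduction modulo `p^ℓ`. -/
theorem stmt_11 (p k l : ℕ) [Fact p.Prime] (hk : 1 ≤ k) (hl : l ≤ k - 1)
    (f : ZMod (p ^ k) → ZMod p) :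
    f ∈ Submodule.span (ZMod p) {g : ZMod (p ^ k) → ZMod p | ∃ i < p ^ l, g = phi p k i} ↔
    ∃ g : ZMod (p ^ l) → ZMod p, ∀ x : ZMod (p ^ k),
      f x = g (ZMod.castHom (pow_dvd_pow p (le_trans hl (Nat.sub_le k 1)))
        (ZMod (p ^ l)) x) :=
  stmt_11_general p k l hl f
end

section
/- For all natural numbers ℓ, m, the pointwise product φ_ℓ·φ_m satisfies φ_ℓ·φ_m − C(ℓ+m, ℓ)·φ_{ℓ+m} ∈ Ω_{ℓ+m−1}, where C(ℓ+m, ℓ) is the binomial coefficient reduced mod p. In particular, φ_ℓ·φ_m ∈ Ω_{ℓ+m}. -/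
/-!
Vandermonde's identity `C(n, m) = ∑ⱼ C(l, j) C(n - l, m - j)` together with
`C(n, l) C(n - l, r) = C(l + r, l) C(n, l + r)` writes `C(n, l) C(n, m)` as an integer combination
of the `C(n, l + m - j)`, `j ≤ m`, with coefficients independent of `n`. Evaluating at `n = x̄` and reducing mod `p`
expresses `φ_l φ_m` in the `φ_i`, `i ≤ l + m`, and the only term with `i = l + m` is the `j = 0`
term `C(l + m, l) φ_{l+m}`.
-/

open Finset

theorem Nat.choose_mul_choose_eq_sum (n l m : ℕ) :
    n.choose l * n.choose m =
      ∑ j ∈ range (m + 1), l.choose j * (l + (m - j)).choose l * n.choose (l + (m - j)) := by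
  have vandermonde : n.choose l * n.choose m =
      n.choose l * ∑ j ∈ range (m + 1), l.choose j * (n - l).choose (m - j) := by
    rcases le_or_gt l n with hln | hnl
    · rw [← Nat.sum_antidiagonal_eq_sum_range_succ (fun a b => l.choose a * (n - l).choose b),
        ← Nat.add_choose_eq, Nat.add_sub_cancel' hln]
    · simp [Nat.choose_eq_zero_of_lt hnl]
  rw [vandermonde, mul_sum]
  refine sum_congr rfl fun j _ => ?_
  have h := Nat.choose_mul (n := n) (Nat.le_add_right l (m - j))
  rw [Nat.add_sub_cancel_left] at h
  rw [mul_left_comm, ← h]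
  ring

theorem phi_mul_phi (p k l m : ℕ) :
    (fun x => phi p k l x * phi p k m x) =
      ∑ j ∈ range (m + 1),
        ((l.choose j * (l + (m - j)).choose l : ℕ) : ZMod p) • phi p k (l + (m - j)) := by
  funext x
  simp only [phi, Finset.sum_apply, Pi.smul_apply, smul_eq_mul]
  rw [← Nat.cast_mul, Nat.choose_mul_choose_eq_sum, Nat.cast_sum]
  simp only [Nat.cast_mul]

theorem phi_mul_phi_sub_mem_span (p k l m : ℕ) :
    (fun x => phi p k l x * phi p k m x - ((l + m).choose l : ZMod p) * phi p k (l + m) x)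
      ∈ Submodule.span (ZMod p) {g | ∃ i < l + m, g = phi p k i} := by
  have expansion := phi_mul_phi p k l m
  rw [sum_range_succ'] at expansion
  have lower_terms :
      (fun x => phi p k l x * phi p k m x - ((l + m).choose l : ZMod p) * phi p k (l + m) x) =
        ∑ j ∈ range m, ((l.choose (j + 1) * (l + (m - (j + 1))).choose l : ℕ) : ZMod p) •
          phi p k (l + (m - (j + 1))) := by
    funext x
    have hx := congrFun expansion x
    simp only [Pi.add_apply, Pi.smul_apply, smul_eq_mul, Nat.choose_zero_right,
      Nat.sub_zero, one_mul] at hx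
    rw [hx, add_sub_cancel_right]
  rw [lower_terms]
  exact Submodule.sum_mem _ fun j hj =>
    Submodule.smul_mem _ _ (Submodule.subset_span ⟨_, by rw [mem_range] at hj; omega, rfl⟩)

theorem stmt_12_general (p k l m : ℕ) :
    ((fun x => phi p k l x * phi p k m x -
        ((l + m).choose l : ZMod p) * phi p k (l + m) x)
      ∈ Submodule.span (ZMod p)
        {g : ZMod (p ^ k) → ZMod p | ∃ i < l + m, g = phi p k i}) ∧
    ((fun x => phi p k l x * phi p k m x)
      ∈ Submodule.span (ZMod p)
        {g : ZMod (p ^ k) → ZMod p | ∃ i ≤ l + m, g = phi p k i}) := by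
  have lower := phi_mul_phi_sub_mem_span p k l m
  refine ⟨lower, ?_⟩
  have span_le : Submodule.span (ZMod p) {g : ZMod (p ^ k) → ZMod p | ∃ i < l + m, g = phi p k i}
      ≤ Submodule.span (ZMod p) {g | ∃ i ≤ l + m, g = phi p k i} :=
    Submodule.span_mono fun g ⟨i, hi, hg⟩ => ⟨i, hi.le, hg⟩
  have top : phi p k (l + m) ∈ Submodule.span (ZMod p) {g | ∃ i ≤ l + m, g = phi p k i} :=
    Submodule.subset_span ⟨_, le_rfl, rfl⟩
  convert add_mem (span_le lower) (Submodule.smul_mem _ ((l + m).choose l : ZMod p) top) using 1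
  funext x
  simp only [Pi.add_apply, Pi.smul_apply, smul_eq_mul, sub_add_cancel]

/-- For all `ℓ, m ∈ ℕ`,
`φ_ℓ·φ_m − C(ℓ+m, ℓ)·φ_{ℓ+m} ∈ Ω_{ℓ+m−1}`; in particular `φ_ℓ·φ_m ∈ Ω_{ℓ+m}`. -/
theorem stmt_12 (p k l m : ℕ) [Fact p.Prime] (hk : 1 ≤ k) :
    ((fun x => phi p k l x * phi p k m x -
        ((l + m).choose l : ZMod p) * phi p k (l + m) x)
      ∈ Submodule.span (ZMod p)
        {g : ZMod (p ^ k) → ZMod p | ∃ i < l + m, g = phi p k i}) ∧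
    ((fun x => phi p k l x * phi p k m x)
      ∈ Submodule.span (ZMod p)
        {g : ZMod (p ^ k) → ZMod p | ∃ i ≤ l + m, g = phi p k i}) :=
  stmt_12_general p k l m
end

section
/- Let b be a unit of R = ℤ/p^kℤ and let m be a natural number with m < p^k. Then the function x ↦ φ_m(b·x) − b̄^m·φ_m(x) lies in Ω_{m−1}, where b̄ ∈ ℤ/pℤ denotes the reduction of b modulo p. -/
open Finset Function fwdDiff

section fwdDiff

variable {M M' G : Type*} [AddCommMonoid M] [AddCommMonoid M'] [AddCommGroup G]

theorem fwdDiff_iter_comp_addMonoidHom (φ : M →+ M') (h : M) (f : M' → G) (n : ℕ) :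
    Δ_[h] ^[n] (f ∘ φ) = Δ_[φ h] ^[n] f ∘ φ := by
  have hsemiconj : Semiconj (· ∘ φ) (Δ_[φ h]) (Δ_[h] : (M → G) → (M → G)) := fun g => by
    funext x
    simp [fwdDiff]
  exact (hsemiconj.iterate_right n f).symm

theorem fwdDiff_iter_eq_zero_of_le {h : M} {f : M → G} {m n : ℕ} (hmn : m ≤ n)
    (hf : Δ_[h] ^[m] f = 0) : Δ_[h] ^[n] f = 0 := by
  obtain ⟨j, rfl⟩ := Nat.exists_eq_add_of_le hmn
  rw [add_comm, iterate_add_apply, hf]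
  exact iterate_fixed (fwdDiff_const h 0) j

theorem ZMod.eq_sum_choose_val_smul_of_fwdDiff_iter_eq_zero {N : ℕ} [NeZero N]
    {f : ZMod N → G} {m : ℕ} (hf : Δ_[1] ^[m] f = 0) (x : ZMod N) :
    f x = ∑ i ∈ range m, x.val.choose i • Δ_[1] ^[i] f 0 := by
  have hnewton := shift_eq_sum_fwdDiff_iter 1 f x.val 0
  rw [zero_add, nsmul_one, ZMod.natCast_zmod_val] at hnewton
  rw [hnewton]
  calc ∑ i ∈ range (x.val + 1), x.val.choose i • Δ_[1] ^[i] f 0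
      = ∑ i ∈ range (x.val + 1 + m), x.val.choose i • Δ_[1] ^[i] f 0 := by
        refine sum_subset (range_subset_range.2 (Nat.le_add_right _ _)) fun i _ hi => ?_
        rw [Nat.choose_eq_zero_of_lt (by grind), zero_smul]
    _ = ∑ i ∈ range m, x.val.choose i • Δ_[1] ^[i] f 0 := by
        refine (sum_subset (range_subset_range.2 (Nat.le_add_left _ _)) fun i _ hi => ?_).symm
        rw [fwdDiff_iter_eq_zero_of_le (by grind) hf, Pi.zero_apply, smul_zero]

end fwdDiff

section choose

variable {R : Type*} [CommRing R]

theorem fwdDiff_natCast_choose (c m : ℕ) :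
    Δ_[c] (fun x : ℕ => (x.choose m : R)) =
      ∑ i ∈ range m, (c.choose (m - i) : R) • fun x : ℕ => (x.choose i : R) := by
  funext x
  rw [fwdDiff, Nat.add_choose_eq, Nat.cast_sum, Nat.sum_antidiagonal_eq_sum_range_succ
    (fun i j => ((x.choose i * c.choose j : ℕ) : R)), sum_range_succ, Nat.sub_self,
    Nat.choose_zero_right, mul_one, add_sub_cancel_right, Finset.sum_apply]
  simp only [Pi.smul_apply, smul_eq_mul, Nat.cast_mul, mul_comm]

theorem fwdDiff_iter_natCast_choose {c n j : ℕ} (hjn : j ≤ n) :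
    Δ_[c] ^[n] (fun x : ℕ => (x.choose j : R)) = fun _ => if j = n then (c : R) ^ n else 0 := by
  induction n generalizing j with
  | zero =>
    obtain rfl : j = 0 := by omega
    funext x
    simp
  | succ n ih =>
    rw [iterate_succ_apply, fwdDiff_natCast_choose, fwdDiff_iter_finsetSum,
      sum_congr rfl fun i hi => by rw [fwdDiff_iter_const_smul, ih (by grind)]]
    funext x
    simp only [Finset.sum_apply, Pi.smul_apply, smul_eq_mul, mul_ite, mul_zero, sum_ite_eq',
      mem_range]
    by_cases hj : j = n + 1
    · simp [hj, pow_succ, mul_comm]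
    · rw [if_neg (by omega), if_neg hj]

theorem fwdDiff_iter_natCast_choose_self (c m : ℕ) :
    Δ_[c] ^[m] (fun x : ℕ => (x.choose m : R)) = fun _ => (c : R) ^ m := by
  simpa using fwdDiff_iter_natCast_choose (R := R) (c := c) le_rfl

end choose

theorem Nat.Prime.natCast_choose_add_pow {p k m : ℕ} (hp : p.Prime) (hm : m < p ^ k) (n : ℕ) :
    ((n + p ^ k).choose m : ZMod p) = n.choose m := by
  rw [Nat.add_choose_eq, Nat.cast_sum, Nat.sum_antidiagonal_eq_sum_range_succ
    (fun i j => ((n.choose i * (p ^ k).choose j : ℕ) : ZMod p)), sum_range_succ, Nat.sub_self,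
    Nat.choose_zero_right, mul_one, add_eq_right]
  refine sum_eq_zero fun i hi => ?_
  have hdvd : p ∣ (p ^ k).choose (m - i) := hp.dvd_choose_pow (by grind) (by grind)
  rw [Nat.cast_mul, (ZMod.natCast_eq_zero_iff _ p).2 hdvd, mul_zero]

section phi

variable {p k m : ℕ} [Fact p.Prime]

theorem phi_natCast (hm : m < p ^ k) (n : ℕ) : phi p k m n = n.choose m := by
  have hperiodic : Periodic (fun n : ℕ => (n.choose m : ZMod p)) (p ^ k) :=
    (Fact.out : p.Prime).natCast_choose_add_pow hm
  rw [phi, ZMod.val_natCast, hperiodic.map_mod_nat]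

theorem fwdDiff_iter_phi_self (hm : m < p ^ k) (c : ZMod (p ^ k)) :
    Δ_[c] ^[m] (phi p k m) = fun _ => (c.val : ZMod p) ^ m := by
  funext x
  have hcomp := congrFun
    (fwdDiff_iter_comp_addMonoidHom (Nat.castAddMonoidHom (ZMod (p ^ k))) c.val (phi p k m) m) x.val
  have hphi : phi p k m ∘ Nat.castAddMonoidHom (ZMod (p ^ k)) = fun n => (n.choose m : ZMod p) :=
    funext (phi_natCast hm)
  rw [hphi, fwdDiff_iter_natCast_choose_self] at hcomp
  simpa using hcomp.symm

theorem mem_span_phi_of_fwdDiff_iter_eq_zero {f : ZMod (p ^ k) → ZMod p}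
    (hf : Δ_[1] ^[m] f = 0) : f ∈ Submodule.span (ZMod p) {g | ∃ i < m, g = phi p k i} := by
  have hsum : f = ∑ i ∈ range m, Δ_[1] ^[i] f 0 • phi p k i := by
    funext x
    rw [ZMod.eq_sum_choose_val_smul_of_fwdDiff_iter_eq_zero hf x]
    simp [phi, nsmul_eq_mul, mul_comm]
  rw [hsum]
  exact Submodule.sum_mem _ fun i hi =>
    Submodule.smul_mem _ _ (Submodule.subset_span ⟨i, mem_range.1 hi, rfl⟩)

end phi

theorem stmt_13_general (p k m : ℕ) [Fact p.Prime] (hk : 1 ≤ k) (hm : m < p ^ k)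
    (b : ZMod (p ^ k)) :
    (fun x => phi p k m (b * x) -
        (ZMod.castHom (dvd_pow_self p (Nat.one_le_iff_ne_zero.mp hk)) (ZMod p) b) ^ m *
          phi p k m x)
      ∈ Submodule.span (ZMod p)
        {g : ZMod (p ^ k) → ZMod p | ∃ i < m, g = phi p k i} := by
  set reduce := ZMod.castHom (dvd_pow_self p (Nat.one_le_iff_ne_zero.mp hk)) (ZMod p)
  have hreduce (c : ZMod (p ^ k)) : (c.val : ZMod p) = reduce c := ZMod.natCast_val c
  have hF : (fun x => phi p k m (b * x) - reduce b ^ m * phi p k m x) =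
      phi p k m ∘ AddMonoidHom.mulLeft b + (-reduce b ^ m) • phi p k m := by
    funext x
    simp [sub_eq_add_neg]
  rw [hF]
  apply mem_span_phi_of_fwdDiff_iter_eq_zero
  rw [fwdDiff_iter_add, fwdDiff_iter_const_smul, fwdDiff_iter_comp_addMonoidHom,
    AddMonoidHom.coe_mulLeft, mul_one, fwdDiff_iter_phi_self hm, fwdDiff_iter_phi_self hm,
    hreduce, hreduce, map_one]
  funext x
  simp

/-- For `b` a unit of `R = ℤ/p^kℤ` and `m < p^k`, the function
`x ↦ φ_m(b·x) − b̄^m·φ_m(x)` lies in `Ω_{m−1}`, where `b̄` is `b` reduced mod `p`. -/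
theorem stmt_13 (p k m : ℕ) [Fact p.Prime] (hk : 1 ≤ k) (hm : m < p ^ k)
    (b : ZMod (p ^ k)) (hb : IsUnit b) :
    (fun x => phi p k m (b * x) -
        (ZMod.castHom (dvd_pow_self p (Nat.one_le_iff_ne_zero.mp hk)) (ZMod p) b) ^ m *
          phi p k m x)
      ∈ Submodule.span (ZMod p)
        {g : ZMod (p ^ k) → ZMod p | ∃ i < m, g = phi p k i} :=
  stmt_13_general p k m hk hm b
end

section
/- Let m be a natural number with m < p^k. Then the two-variable function f : R² → ℤ/pℤ defined by f(x,y) = φ_m(x·y) (the product x·y computed in R = ℤ/p^kℤ) lies in Ω^2_{m+2(p−1)}. -/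
/-!
For `i, j < p ^ k`, Lucas' theorem gives `φ_m(x y) = C(i j, m) mod p` where `x̄ = i`, `ȳ = j`, so the
two-variable Newton expansion writes `φ_m(x y) = ∑_{a, b < p^k} c_{a,b} φ_a(x) φ_b(y)` with
`c_{a,b} = Δ_i^a Δ_j^b C(i j, m) |_{(0,0)}`. This is the coefficient of `X^m` in
`F_{a,b} = Δ_j^b ((1 + X)^j - 1)^a |_{j=0}`, the mixed difference of `(1 + X)^(i j)`.
In characteristic `p`, `Δ^p` is the difference with step `p` and `(1 + X)^p = 1 + X^p`; this gives a
recursion in `b` (and, by symmetry, in `a`) showing `X^(p⌊a/p⌋ + p⌊b/p⌋) ∣ F_{a,b}`, Lucas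
killing the terms that would lose a factor `X^p`. As `a + b ≤ p⌊a/p⌋ + p⌊b/p⌋ + 2(p - 1)`,
`c_{a,b} = 0` as soon as `a + b > m + 2(p - 1)`.
-/

open Finset Polynomial fwdDiff

section FwdDiff

variable {M G : Type*} [AddCommMonoid M] [AddCommGroup G]

theorem fwdDiff_iter_char_eq_sub (p : ℕ) [Fact p.Prime] {S : Type*} [Ring S] [CharP S p]
    (h : M) (f : M → S) (y : M) : Δ_[h] ^[p] f y = f (y + p • h) - f y := by
  have hp : p.Prime := Fact.out
  rw [fwdDiff_iter_eq_sum_shift, sum_range_succ, sum_eq_single 0]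
  · simp [neg_one_pow_char, sub_eq_neg_add]
  · intro k hk hk0
    obtain ⟨c, hc⟩ := hp.dvd_choose_self hk0 (mem_range.mp hk)
    simp [hc, zsmul_eq_mul]
  · simp [hp.pos]

theorem fwdDiff_iter_pow_apply {R : Type*} [Ring R] (r : R) (n x : ℕ) :
    Δ_[1] ^[n] (fun i : ℕ ↦ r ^ i) x = (r - 1) ^ n * r ^ x :=
  fwdDiff_addChar_eq ⟨(r ^ ·), pow_zero r, pow_add r⟩ x 1 n |>.trans (by simp)

theorem AddMonoidHom.map_fwdDiff_iter {G' : Type*} [AddCommGroup G'] (φ : G →+ G') (h : M)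
    (f : M → G) (n : ℕ) (y : M) : φ (Δ_[h] ^[n] f y) = Δ_[h] ^[n] (φ ∘ f) y := by
  simp [fwdDiff_iter_eq_sum_shift, map_zsmul]

theorem eq_sum_range_choose_smul_fwdDiff_iter (f : ℕ → G) {n q : ℕ} (hn : n < q) :
    f n = ∑ a ∈ range q, n.choose a • Δ_[1] ^[a] f 0 := by
  have h := shift_eq_sum_fwdDiff_iter 1 f n 0
  rw [zero_add, smul_eq_mul, mul_one] at h
  rw [h]
  refine sum_subset (range_subset_range.mpr hn) fun a _ ha ↦ ?_
  rw [Nat.choose_eq_zero_of_lt (by simpa using ha), zero_smul]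

def mixedFwdDiff (F : ℕ → ℕ → G) (a b : ℕ) : G :=
  Δ_[1] ^[b] (fun j ↦ Δ_[1] ^[a] (fun i ↦ F i j) 0) 0

theorem mixedFwdDiff_swap (F : ℕ → ℕ → G) (a b : ℕ) :
    mixedFwdDiff (fun i j ↦ F j i) b a = mixedFwdDiff F a b := by
  simp only [mixedFwdDiff, fwdDiff_iter_eq_sum_shift (1 : ℕ), smul_sum, zero_add, smul_eq_mul,
    mul_one]
  rw [sum_comm]
  exact sum_congr rfl fun _ _ ↦ sum_congr rfl fun _ _ ↦ smul_comm _ _ _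

theorem AddMonoidHom.map_mixedFwdDiff {G' : Type*} [AddCommGroup G'] (φ : G →+ G')
    (F : ℕ → ℕ → G) (a b : ℕ) : φ (mixedFwdDiff F a b) = mixedFwdDiff (fun i j ↦ φ (F i j)) a b := by
  simp only [mixedFwdDiff, φ.map_fwdDiff_iter, Function.comp_def]

theorem eq_sum_choose_smul_mixedFwdDiff (F : ℕ → ℕ → G) {i j q : ℕ} (hi : i < q) (hj : j < q) :
    F i j = ∑ a ∈ range q, ∑ b ∈ range q, (i.choose a * j.choose b) • mixedFwdDiff F a b := by
  rw [eq_sum_range_choose_smul_fwdDiff_iter (F · j) hi]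
  refine sum_congr rfl fun a _ ↦ ?_
  rw [eq_sum_range_choose_smul_fwdDiff_iter (fun j ↦ Δ_[1] ^[a] (F · j) 0) hj, smul_sum]
  simp only [mixedFwdDiff, mul_smul]

end FwdDiff

theorem Nat.dvd_choose_of_mod_lt {p a i : ℕ} [Fact p.Prime] (h : a % p < i % p) :
    p ∣ a.choose i := by
  have hlucas := Choose.choose_modEq_choose_mod_mul_choose_div_nat (p := p) (n := a) (k := i)
  rw [Nat.choose_eq_zero_of_lt h, zero_mul] at hlucas
  exact Nat.modEq_zero_iff_dvd.mp hlucas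

theorem Nat.choose_mod_pow_modEq (p : ℕ) [Fact p.Prime] {k m : ℕ} (hm : m < p ^ k) (n : ℕ) :
    (n % p ^ k).choose m ≡ n.choose m [MOD p] := by
  induction k generalizing m n with
  | zero => simp [Nat.lt_one_iff.mp (by simpa using hm), Nat.ModEq.refl]
  | succ k ih =>
    have hmod : n % p ^ (k + 1) % p = n % p := Nat.mod_mod_of_dvd n (dvd_pow_self p k.succ_ne_zero)
    have hdiv : n % p ^ (k + 1) / p = n / p % p ^ k := by
      rw [pow_succ', Nat.mod_mul_right_div_self]
    have hm' : m / p < p ^ k := Nat.div_lt_of_lt_mul (by rwa [← pow_succ'])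
    calc (n % p ^ (k + 1)).choose m
        ≡ (n % p).choose (m % p) * (n / p % p ^ k).choose (m / p) [MOD p] := by
          rw [← hmod, ← hdiv]
          exact Choose.choose_modEq_choose_mod_mul_choose_div_nat
      _ ≡ (n % p).choose (m % p) * (n / p).choose (m / p) [MOD p] := (ih hm' _).mul_left _
      _ ≡ n.choose m [MOD p] := Choose.choose_modEq_choose_mod_mul_choose_div_nat.symm

theorem Nat.div_add_one_le_sub_add_div {p a i : ℕ} (hp : 2 ≤ p) (hia : i < a)
    (hmod : i % p ≤ a % p) : a / p + 1 ≤ a - i + i / p := by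
  obtain ⟨d, hd⟩ := Nat.exists_eq_add_of_le (Nat.div_le_div_right (c := p) hia.le)
  have ha := Nat.div_add_mod a p
  have hi := Nat.div_add_mod i p
  have hpd : 2 * d ≤ p * d := Nat.mul_le_mul_right d hp
  rw [hd, Nat.mul_add] at ha
  generalize p * d = P at *
  generalize p * (i / p) = Q at *
  omega

section BinomDiffPoly

variable (R : Type*) [CommRing R]

noncomputable def binomDiffPoly (a b : ℕ) : R[X] :=
  Δ_[1] ^[b] (fun j : ℕ ↦ ((X + 1) ^ j - 1) ^ a) 0

theorem binomDiffPoly_eq_mixedFwdDiff (a b : ℕ) :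
    binomDiffPoly R a b = mixedFwdDiff (fun i j ↦ (X + 1 : R[X]) ^ (i * j)) a b := by
  simp only [binomDiffPoly, mixedFwdDiff, pow_mul', fwdDiff_iter_pow_apply, pow_zero, mul_one]

theorem binomDiffPoly_comm (a b : ℕ) : binomDiffPoly R a b = binomDiffPoly R b a := by
  rw [binomDiffPoly_eq_mixedFwdDiff, binomDiffPoly_eq_mixedFwdDiff, ← mixedFwdDiff_swap]
  simp only [mul_comm]

theorem coeff_binomDiffPoly (m a b : ℕ) :
    (binomDiffPoly R a b).coeff m = mixedFwdDiff (fun i j ↦ ((i * j).choose m : R)) a b := by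
  rw [binomDiffPoly_eq_mixedFwdDiff, ← lcoeff_apply, ← LinearMap.toAddMonoidHom_coe,
    AddMonoidHom.map_mixedFwdDiff]
  simp only [LinearMap.toAddMonoidHom_coe, lcoeff_apply, coeff_X_add_one_pow]

variable (p : ℕ) [Fact p.Prime] [CharP R p]

theorem X_add_one_pow_add_char_sub_one_pow (a j : ℕ) :
    ((X + 1 : R[X]) ^ (j + p) - 1) ^ a = ∑ i ∈ range (a + 1),
      ((a.choose i : R[X]) * (X ^ p + 1) ^ i * X ^ (p * (a - i))) * ((X + 1) ^ j - 1) ^ i := by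
  have hfrob : (X + 1 : R[X]) ^ (j + p) - 1 = (X ^ p + 1) * ((X + 1) ^ j - 1) + X ^ p := by
    rw [pow_add, add_pow_char (p := p) (X : R[X]) 1, one_pow]
    ring
  rw [hfrob, add_pow]
  refine sum_congr rfl fun i _ ↦ ?_
  rw [mul_pow, ← pow_mul]
  ring

theorem binomDiffPoly_eq_of_le {a b : ℕ} (hb : p ≤ b) :
    binomDiffPoly R a b = ∑ i ∈ range a,
        ((a.choose i : R[X]) * (X ^ p + 1) ^ i * X ^ (p * (a - i))) * binomDiffPoly R i (b - p)
      + ((X ^ p + 1) ^ a - 1) * binomDiffPoly R a (b - p) := by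
  have hshift : Δ_[1] ^[p] (fun j : ℕ ↦ ((X + 1 : R[X]) ^ j - 1) ^ a)
      = ∑ i ∈ range a, ((a.choose i : R[X]) * (X ^ p + 1) ^ i * X ^ (p * (a - i)) : R[X]) •
          (fun j : ℕ ↦ ((X + 1 : R[X]) ^ j - 1) ^ i)
        + ((X ^ p + 1) ^ a - 1 : R[X]) • (fun j : ℕ ↦ ((X + 1 : R[X]) ^ j - 1) ^ a) := by
    funext j
    rw [fwdDiff_iter_char_eq_sub p, smul_eq_mul, mul_one, X_add_one_pow_add_char_sub_one_pow,
      sum_range_succ]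
    simp only [Pi.add_apply, Finset.sum_apply, Pi.smul_apply, smul_eq_mul, Nat.choose_self,
      Nat.sub_self, mul_zero, pow_zero, Nat.cast_one]
    ring
  rw [binomDiffPoly, ← Nat.sub_add_cancel hb, Function.iterate_add_apply, hshift,
    fwdDiff_iter_add, fwdDiff_iter_finsetSum, Nat.add_sub_cancel]
  simp only [fwdDiff_iter_const_smul, Pi.add_apply, Finset.sum_apply, Pi.smul_apply, smul_eq_mul]
  rfl

theorem X_pow_dvd_binomDiffPoly_of_le {a b : ℕ} (hb : p ≤ b)
    (ih : ∀ i j, i + j < a + b → (X : R[X]) ^ (p * (i / p) + p * (j / p)) ∣ binomDiffPoly R i j) :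
    (X : R[X]) ^ (p * (a / p) + p * (b / p)) ∣ binomDiffPoly R a b := by
  have hp : 2 ≤ p := (Fact.out : p.Prime).two_le
  have hbp : p * (b / p) = p * ((b - p) / p) + p := by
    rw [Nat.div_eq_sub_div (by omega) hb, Nat.mul_succ]
  rw [binomDiffPoly_eq_of_le R p hb]
  refine dvd_add (dvd_sum fun i hi ↦ ?_) ?_
  · rw [mem_range] at hi
    by_cases hdvd : p ∣ a.choose i
    · simp [(CharP.cast_eq_zero_iff R[X] p _).mpr hdvd]
    have hexp : p * (a / p) + p ≤ p * (a - i) + p * (i / p) := by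
      have := Nat.mul_le_mul_left p <|
        Nat.div_add_one_le_sub_add_div hp hi (not_lt.mp (mt Nat.dvd_choose_of_mod_lt hdvd))
      rwa [Nat.mul_add, Nat.mul_add, mul_one] at this
    have hdvd' : (X : R[X]) ^ (p * (a - i) + (p * (i / p) + p * ((b - p) / p)))
        ∣ X ^ (p * (a - i)) * binomDiffPoly R i (b - p) := by
      rw [pow_add]
      exact mul_dvd_mul_left _ (ih i (b - p) (by omega))
    rw [mul_assoc]
    exact ((pow_dvd_pow X (by omega)).trans hdvd').mul_left _
  · have hXp : (X : R[X]) ^ p ∣ (X ^ p + 1) ^ a - 1 := by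
      simpa using sub_dvd_pow_sub_pow ((X : R[X]) ^ p + 1) 1 a
    have hdvd' : (X : R[X]) ^ (p + (p * (a / p) + p * ((b - p) / p)))
        ∣ ((X ^ p + 1) ^ a - 1) * binomDiffPoly R a (b - p) := by
      rw [pow_add]
      exact mul_dvd_mul hXp (ih a (b - p) (by omega))
    exact (pow_dvd_pow X (by omega)).trans hdvd'

theorem X_pow_dvd_binomDiffPoly (a b : ℕ) :
    (X : R[X]) ^ (p * (a / p) + p * (b / p)) ∣ binomDiffPoly R a b := by
  induction h : a + b using Nat.strong_induction_on generalizing a b with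
  | _ n ih =>
    have ih' : ∀ i j, i + j < a + b →
        (X : R[X]) ^ (p * (i / p) + p * (j / p)) ∣ binomDiffPoly R i j :=
      fun i j hij ↦ ih _ (h ▸ hij) i j rfl
    rcases le_or_gt p b with hb | hb
    · exact X_pow_dvd_binomDiffPoly_of_le R p hb ih'
    rcases le_or_gt p a with ha | ha
    · rw [binomDiffPoly_comm, add_comm]
      exact X_pow_dvd_binomDiffPoly_of_le R p ha fun i j hij ↦ ih' i j (by omega)
    · simp [Nat.div_eq_of_lt ha, Nat.div_eq_of_lt hb]

theorem coeff_binomDiffPoly_eq_zero {m a b : ℕ} (hab : m + 2 * (p - 1) < a + b) :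
    (binomDiffPoly R a b).coeff m = 0 := by
  refine X_pow_dvd_iff.mp (X_pow_dvd_binomDiffPoly R p a b) m ?_
  have := Nat.mod_lt a (Fact.out : p.Prime).pos
  have := Nat.mod_lt b (Fact.out : p.Prime).pos
  have := Nat.div_add_mod a p
  have := Nat.div_add_mod b p
  omega

end BinomDiffPoly

theorem phi_mul_eq_choose (p : ℕ) [Fact p.Prime] {k m : ℕ} (hm : m < p ^ k)
    (x y : ZMod (p ^ k)) : phi p k m (x * y) = ((x.val * y.val).choose m : ZMod p) := by
  have : NeZero (p ^ k) := ⟨pow_ne_zero k (Fact.out : p.Prime).ne_zero⟩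
  rw [phi, ZMod.val_mul]
  exact (ZMod.natCast_eq_natCast_iff _ _ _).mpr (Nat.choose_mod_pow_modEq p hm _)

theorem phi_mul_eq_sum (p : ℕ) [Fact p.Prime] {k m : ℕ} (hm : m < p ^ k) (x y : ZMod (p ^ k)) :
    phi p k m (x * y) = ∑ a ∈ range (p ^ k), ∑ b ∈ range (p ^ k),
      (binomDiffPoly (ZMod p) a b).coeff m * (phi p k a x * phi p k b y) := by
  have : NeZero (p ^ k) := ⟨pow_ne_zero k (Fact.out : p.Prime).ne_zero⟩
  rw [phi_mul_eq_choose p hm, eq_sum_choose_smul_mixedFwdDiff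
    (fun i j ↦ ((i * j).choose m : ZMod p)) (ZMod.val_lt x) (ZMod.val_lt y)]
  simp only [coeff_binomDiffPoly, phi, nsmul_eq_mul, Nat.cast_mul, mul_comm]

theorem stmt_19_general (p k m : ℕ) [Fact p.Prime] (hm : m < p ^ k) :
    (fun v : Fin 2 → ZMod (p ^ k) => phi p k m (v 0 * v 1))
      ∈ Submodule.span (ZMod p)
        {f : (Fin 2 → ZMod (p ^ k)) → ZMod p |
          ∃ α : Fin 2 → ℕ, α 0 + α 1 ≤ m + 2 * (p - 1) ∧
            f = fun v => phi p k (α 0) (v 0) * phi p k (α 1) (v 1)} := by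
  have hsum : (fun v : Fin 2 → ZMod (p ^ k) => phi p k m (v 0 * v 1))
      = ∑ a ∈ range (p ^ k), ∑ b ∈ range (p ^ k), (binomDiffPoly (ZMod p) a b).coeff m •
          fun v : Fin 2 → ZMod (p ^ k) => phi p k a (v 0) * phi p k b (v 1) := by
    funext v
    simp only [Finset.sum_apply, Pi.smul_apply, smul_eq_mul, phi_mul_eq_sum p hm]
  rw [hsum]
  refine Submodule.sum_mem _ fun a _ ↦ Submodule.sum_mem _ fun b _ ↦ ?_
  by_cases hab : a + b ≤ m + 2 * (p - 1)
  · exact Submodule.smul_mem _ _ (Submodule.subset_span ⟨![a, b], by simpa using hab, rfl⟩)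
  · rw [coeff_binomDiffPoly_eq_zero (ZMod p) p (not_le.mp hab), zero_smul]
    exact Submodule.zero_mem _

/-- For `m < p^k`, the two-variable function `(x,y) ↦ φ_m(x·y)` on
`R² = (ℤ/p^kℤ)²` lies in `Ω²_{m+2(p−1)}`. -/
theorem stmt_19 (p k m : ℕ) [Fact p.Prime] (hk : 1 ≤ k) (hm : m < p ^ k) :
    (fun v : Fin 2 → ZMod (p ^ k) => phi p k m (v 0 * v 1))
      ∈ Submodule.span (ZMod p)
        {f : (Fin 2 → ZMod (p ^ k)) → ZMod p |
          ∃ α : Fin 2 → ℕ, α 0 + α 1 ≤ m + 2 * (p - 1) ∧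
            f = fun v => phi p k (α 0) (v 0) * phi p k (α 1) (v 1)} :=
  stmt_19_general p k m hm
end
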